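/- arXiv:1010.2183 — 5 statements merged into one kernel-verified Lean document; each statement's English description precedes it below -/
import Mathlib

section
/- Let P be a differentiable family of Hermitian rank-1 projectors with P e ≠ 0. Then (∂±P)·P·e = D±P·e, where D±P = ∂±P − ⟨P, ∂±P⟩·P. -/
/-
Differentiating `P * P = P` gives the Leibniz identity `∂P = P ∂P + ∂P P`, so
`∂P P e = ∂P e - P ∂P e`. Since `P` is an idempotent of trace one, its range is a line, spanned
by `P e ≠ 0`; hence `P ∂P e` is a multiple of `P e`, and pairing with `e†` identifies the
coefficient as `⟨P, ∂P⟩`, the pairing being nondegenerate because `e† P e = ‖P e‖²` for a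
Hermitian idempotent.
-/

open Matrix

/-- Entrywise partial derivative of a matrix family in the first real coordinate. -/
noncomputable def pd1 {N : ℕ} (f : ℝ × ℝ → Matrix (Fin N) (Fin N) ℂ) (p : ℝ × ℝ) :
    Matrix (Fin N) (Fin N) ℂ :=
  Matrix.of fun i j => fderiv ℝ (fun q => f q i j) p (1, 0)

/-- Entrywise partial derivative of a matrix family in the second real coordinate. -/
noncomputable def pd2 {N : ℕ} (f : ℝ × ℝ → Matrix (Fin N) (Fin N) ℂ) (p : ℝ × ℝ) :
    Matrix (Fin N) (Fin N) ℂ :=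
  Matrix.of fun i j => fderiv ℝ (fun q => f q i j) p (0, 1)

/-- `∂₊ = (∂₁ - i∂₂)/2` for matrix families. -/
noncomputable def pdp {N : ℕ} (f : ℝ × ℝ → Matrix (Fin N) (Fin N) ℂ) (p : ℝ × ℝ) :
    Matrix (Fin N) (Fin N) ℂ :=
  ((1 : ℂ) / 2) • (pd1 f p - Complex.I • pd2 f p)

/-- `∂₋ = (∂₁ + i∂₂)/2` for matrix families. -/
noncomputable def pdm {N : ℕ} (f : ℝ × ℝ → Matrix (Fin N) (Fin N) ℂ) (p : ℝ × ℝ) :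
    Matrix (Fin N) (Fin N) ℂ :=
  ((1 : ℂ) / 2) • (pd1 f p + Complex.I • pd2 f p)

/-- The sesquilinear product `⟨X,Y⟩ = (e† Xᴴ Y e)/(e† P e)`. -/
noncomputable def sesq {N : ℕ} (P : Matrix (Fin N) (Fin N) ℂ) (e : Fin N → ℂ)
    (X Y : Matrix (Fin N) (Fin N) ℂ) : ℂ :=
  (star e ⬝ᵥ (Xᴴ * Y).mulVec e) / (star e ⬝ᵥ P.mulVec e)

/-- The covariant derivative `D₊X = ∂₊X − ⟨P,∂₊P⟩ X`. -/
noncomputable def Dp {N : ℕ} (P : ℝ × ℝ → Matrix (Fin N) (Fin N) ℂ) (e : Fin N → ℂ)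
    (X : ℝ × ℝ → Matrix (Fin N) (Fin N) ℂ) (p : ℝ × ℝ) : Matrix (Fin N) (Fin N) ℂ :=
  pdp X p - sesq (P p) e (P p) (pdp P p) • X p

/-- The covariant derivative `D₋X = ∂₋X − ⟨P,∂₋P⟩ X`. -/
noncomputable def Dm {N : ℕ} (P : ℝ × ℝ → Matrix (Fin N) (Fin N) ℂ) (e : Fin N → ℂ)
    (X : ℝ × ℝ → Matrix (Fin N) (Fin N) ℂ) (p : ℝ × ℝ) : Matrix (Fin N) (Fin N) ℂ :=
  pdm X p - sesq (P p) e (P p) (pdm P p) • X p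

section RankOne

variable {K n : Type*} [Field K] [CharZero K] [Fintype n] [DecidableEq n]

theorem Matrix.finrank_range_toLin'_eq_one {A : Matrix n n K} (hA : IsIdempotentElem A)
    (htr : A.trace = 1) : Module.finrank K (LinearMap.range A.toLin') = 1 := by
  have hA' : IsIdempotentElem A.toLin' := hA.map Matrix.toLinAlgEquiv'
  have htrace := (LinearMap.IsIdempotentElem.isProj_range _ hA').trace
  rw [Matrix.trace_toLin'_eq, htr] at htrace
  exact_mod_cast htrace.symm

theorem Matrix.exists_smul_mulVec_eq_of_trace_eq_one {A : Matrix n n K}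
    (hA : IsIdempotentElem A) (htr : A.trace = 1) {v : n → K} (hv : A *ᵥ v ≠ 0) (w : n → K) :
    ∃ c : K, c • A *ᵥ v = A *ᵥ w := by
  have hrange := Matrix.finrank_range_toLin'_eq_one hA htr
  rw [finrank_eq_one_iff_of_nonzero' (⟨A *ᵥ v, v, rfl⟩ : LinearMap.range A.toLin')
    fun h => hv (congrArg Subtype.val h)] at hrange
  obtain ⟨c, hc⟩ := hrange ⟨A *ᵥ w, w, rfl⟩
  exact ⟨c, congrArg Subtype.val hc⟩

theorem Matrix.mulVec_eq_dotProduct_div_smul_of_trace_eq_one {A : Matrix n n K}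
    (hA : IsIdempotentElem A) (htr : A.trace = 1) {u v : n → K} (huv : u ⬝ᵥ A *ᵥ v ≠ 0)
    (w : n → K) : A *ᵥ w = ((u ⬝ᵥ A *ᵥ w) / (u ⬝ᵥ A *ᵥ v)) • A *ᵥ v := by
  have hv : A *ᵥ v ≠ 0 := fun h => huv (by rw [h, dotProduct_zero])
  obtain ⟨c, hc⟩ := Matrix.exists_smul_mulVec_eq_of_trace_eq_one hA htr hv w
  rw [← hc, dotProduct_smul, smul_eq_mul, mul_div_cancel_right₀ _ huv]

end RankOne

open scoped ComplexOrder in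
theorem Matrix.IsHermitian.star_dotProduct_mulVec_ne_zero {n : Type*} [Fintype n]
    {A : Matrix n n ℂ} (hA : IsIdempotentElem A) (hAh : A.IsHermitian) {e : n → ℂ}
    (he : A *ᵥ e ≠ 0) : star e ⬝ᵥ A *ᵥ e ≠ 0 := by
  have : star e ⬝ᵥ A *ᵥ e = star (A *ᵥ e) ⬝ᵥ A *ᵥ e := by
    rw [star_mulVec, hAh.eq, ← dotProduct_mulVec, mulVec_mulVec, hA.eq]
  rwa [this, Ne, dotProduct_star_self_eq_zero]

theorem mul_mulVec_eq_sub_sesq_smul {N : ℕ} {A M : Matrix (Fin N) (Fin N) ℂ} {e : Fin N → ℂ}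
    (hA : IsIdempotentElem A) (hAh : A.IsHermitian) (htr : A.trace = 1) (he : A *ᵥ e ≠ 0)
    (hM : A * M + M * A = M) :
    (M * A) *ᵥ e = M *ᵥ e - sesq A e A M • A *ᵥ e := by
  have hproj := Matrix.mulVec_eq_dotProduct_div_smul_of_trace_eq_one hA htr
    (hAh.star_dotProduct_mulVec_ne_zero hA he) (M *ᵥ e)
  calc (M * A) *ᵥ e = M *ᵥ e - A *ᵥ (M *ᵥ e) := by
        rw [eq_sub_iff_add_eq, mulVec_mulVec, ← add_mulVec, add_comm, hM]
    _ = M *ᵥ e - sesq A e A M • A *ᵥ e := by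
        rw [hproj, sesq, hAh.eq, mulVec_mulVec]

section EntrywiseDerivative

variable {E : Type*} [NormedAddCommGroup E] [NormedSpace ℝ E]

noncomputable def matFDeriv {m n : Type*} (f : E → Matrix m n ℂ) (p v : E) : Matrix m n ℂ :=
  Matrix.of fun i j => fderiv ℝ (fun q => f q i j) p v

theorem matFDeriv_mul {l m n : Type*} [Fintype m] {f : E → Matrix l m ℂ}
    {g : E → Matrix m n ℂ} {p : E} (hf : ∀ i j, DifferentiableAt ℝ (fun q => f q i j) p)
    (hg : ∀ i j, DifferentiableAt ℝ (fun q => g q i j) p) (v : E) :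
    matFDeriv (fun q => f q * g q) p v = matFDeriv f p v * g p + f p * matFDeriv g p v := by
  ext i j
  have hterm : ∀ k, fderiv ℝ (fun q => f q i k * g q k j) p v =
      fderiv ℝ (fun q => f q i k) p v * g p k j + f p i k * fderiv ℝ (fun q => g q k j) p v := by
    intro k
    rw [fderiv_fun_mul (hf i k) (hg k j)]
    simp only [_root_.add_apply, _root_.smul_apply, smul_eq_mul]
    ring
  simp only [matFDeriv, of_apply, mul_apply, Matrix.add_apply, ← Finset.sum_add_distrib, ← hterm]
  rw [fderiv_fun_sum (A := fun k q => f q i k * g q k j) fun k _ => (hf i k).mul (hg k j)]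
  simp only [FunLike.coe_sum, Finset.sum_apply]

end EntrywiseDerivative

section Wirtinger

variable {N : ℕ} {f g : ℝ × ℝ → Matrix (Fin N) (Fin N) ℂ} {p : ℝ × ℝ}

theorem pd1_mul (hf : ∀ i j, DifferentiableAt ℝ (fun q => f q i j) p)
    (hg : ∀ i j, DifferentiableAt ℝ (fun q => g q i j) p) :
    pd1 (fun q => f q * g q) p = pd1 f p * g p + f p * pd1 g p :=
  matFDeriv_mul hf hg (1, 0)

theorem pd2_mul (hf : ∀ i j, DifferentiableAt ℝ (fun q => f q i j) p)
    (hg : ∀ i j, DifferentiableAt ℝ (fun q => g q i j) p) :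
    pd2 (fun q => f q * g q) p = pd2 f p * g p + f p * pd2 g p :=
  matFDeriv_mul hf hg (0, 1)

theorem pdp_mul (hf : ∀ i j, DifferentiableAt ℝ (fun q => f q i j) p)
    (hg : ∀ i j, DifferentiableAt ℝ (fun q => g q i j) p) :
    pdp (fun q => f q * g q) p = pdp f p * g p + f p * pdp g p := by
  simp only [pdp, pd1_mul hf hg, pd2_mul hf hg, sub_mul, mul_sub, Matrix.smul_mul,
    Matrix.mul_smul]
  module

theorem pdm_mul (hf : ∀ i j, DifferentiableAt ℝ (fun q => f q i j) p)
    (hg : ∀ i j, DifferentiableAt ℝ (fun q => g q i j) p) :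
    pdm (fun q => f q * g q) p = pdm f p * g p + f p * pdm g p := by
  simp only [pdm, pd1_mul hf hg, pd2_mul hf hg, add_mul, mul_add, Matrix.smul_mul,
    Matrix.mul_smul]
  module

end Wirtinger

/-- For a differentiable family of Hermitian rank-1 projectors, `(∂±P)·P·e = (D±P)·e`. -/
theorem deriv_mul_proj_apply {N : ℕ} (P : ℝ × ℝ → Matrix (Fin N) (Fin N) ℂ) (e : Fin N → ℂ)
    (hdiff : ∀ i j, Differentiable ℝ fun q => P q i j)
    (hidem : ∀ p, P p * P p = P p) (hherm : ∀ p, (P p)ᴴ = P p)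
    (htr : ∀ p, Matrix.trace (P p) = 1) (he : ∀ p, (P p).mulVec e ≠ 0) :
    ∀ p : ℝ × ℝ,
      (pdp P p * P p).mulVec e = (Dp P e P p).mulVec e ∧
      (pdm P p * P p).mulVec e = (Dm P e P p).mulVec e := by
  intro p
  have hsq : (fun q => P q * P q) = P := funext hidem
  have hdiffAt : ∀ i j, DifferentiableAt ℝ (fun q => P q i j) p := fun i j => hdiff i j p
  have hleibniz_p : P p * pdp P p + pdp P p * P p = pdp P p := by
    rw [add_comm, ← pdp_mul hdiffAt hdiffAt, hsq]
  have hleibniz_m : P p * pdm P p + pdm P p * P p = pdm P p := by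
    rw [add_comm, ← pdm_mul hdiffAt hdiffAt, hsq]
  rw [Dp, Dm, sub_mulVec, sub_mulVec, smul_mulVec, smul_mulVec]
  exact ⟨mul_mulVec_eq_sub_sesq_smul (hidem p) (hherm p) (htr p) (he p) hleibniz_p,
    mul_mulVec_eq_sub_sesq_smul (hidem p) (hherm p) (htr p) (he p) hleibniz_m⟩
end

section
/- Let P be a differentiable family of Hermitian rank-1 projectors with P e ≠ 0. Then ‖D₊P‖² = tr((∂₊P)·P·(∂₋P)) and ‖D₋P‖² = tr((∂₋P)·P·(∂₊P)), where ‖X‖² = (e† X† X e)/(e† P e). In particular these quantities are independent of the choice of e. -/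
open Matrix

/-!
Write `u = P e` and `d = e† P e = u† u ≠ 0`. A Hermitian idempotent of trace one projects onto
a line, here the line through `u`, so `d • P = u u†`. Differentiating `P² = P` shows that
`A = ∂±P` satisfies `A = A P + P A`; hence `A e = A u + P A e` with `P A e = ⟨P, A⟩ u`, so the
covariant derivative sends `e` to `A u`. Both sides of each identity are then `‖A u‖² / d`,
using `(∂₊P)† = ∂₋P` on the right.
-/

namespace Matrix

variable {n K : Type*} [Fintype n] [Field K]

theorem finrank_range_toLin'_eq_trace [DecidableEq n] {P : Matrix n n K}
    (hid : IsIdempotentElem P) : (Module.finrank K (LinearMap.range P.toLin') : K) = P.trace := by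
  have hproj : IsIdempotentElem P.toLin' := by
    rw [IsIdempotentElem, Module.End.mul_eq_comp, ← toLin'_mul, hid.eq]
  rw [← ((LinearMap.isProj_range_iff_isIdempotentElem _).mpr hproj).trace, trace_toLin'_eq]

theorem star_dotProduct_mulVec_eq_of_isIdempotentElem [StarRing K] {P : Matrix n n K}
    (hid : IsIdempotentElem P) (hP : P.IsHermitian) (e : n → K) :
    star e ⬝ᵥ P *ᵥ e = star (P *ᵥ e) ⬝ᵥ P *ᵥ e := by
  rw [star_mulVec, ← dotProduct_mulVec, hP.eq, mulVec_mulVec, hid.eq]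

theorem smul_eq_vecMulVec_of_trace_eq_one [DecidableEq n] [CharZero K] [StarRing K]
    {P : Matrix n n K} (hid : IsIdempotentElem P) (hP : P.IsHermitian) (ht : P.trace = 1)
    (e : n → K) : (star e ⬝ᵥ P *ᵥ e) • P = vecMulVec (P *ᵥ e) (star (P *ᵥ e)) := by
  rw [star_dotProduct_mulVec_eq_of_isIdempotentElem hid hP]
  set u := P *ᵥ e
  by_cases hu : u = 0
  · simp [hu]
  have hPu : P *ᵥ u = u := by rw [mulVec_mulVec, hid.eq]
  refine ext_iff_mulVec.mpr fun x => ?_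
  have hrank : Module.finrank K (LinearMap.range P.toLin') = 1 := by
    exact_mod_cast (finrank_range_toLin'_eq_trace hid).trans ht
  obtain ⟨c, hc⟩ := (finrank_eq_one_iff_of_nonzero' (⟨u, e, rfl⟩ : LinearMap.range P.toLin')
    fun h => hu (congrArg Subtype.val h)).mp hrank ⟨P *ᵥ x, x, rfl⟩
  have hPx : P *ᵥ x = c • u := by simpa using congrArg Subtype.val hc.symm
  have hstar : star u ᵥ* P = star u := by rw [← hP.eq, ← star_mulVec, hPu]
  have hux : star u ⬝ᵥ x = c * star u ⬝ᵥ u := calc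
    star u ⬝ᵥ x = star u ⬝ᵥ P *ᵥ x := by rw [dotProduct_mulVec, hstar]
    _ = c * star u ⬝ᵥ u := by rw [hPx, dotProduct_smul, smul_eq_mul]
  rw [smul_mulVec, hPx, vecMulVec_mulVec, op_smul_eq_smul, hux, smul_smul, mul_comm]

end Matrix

theorem sesq_eq_star_mulVec_dotProduct {N : ℕ} (P : Matrix (Fin N) (Fin N) ℂ) (e : Fin N → ℂ)
    (X Y : Matrix (Fin N) (Fin N) ℂ) :
    sesq P e X Y = star (X *ᵥ e) ⬝ᵥ Y *ᵥ e / (star e ⬝ᵥ P *ᵥ e) := by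
  rw [sesq, ← mulVec_mulVec, dotProduct_mulVec, star_mulVec]

open scoped ComplexOrder in
theorem sesq_sub_sesq_smul_self_eq_trace {N : ℕ} {P A : Matrix (Fin N) (Fin N) ℂ} {e : Fin N → ℂ}
    (hid : IsIdempotentElem P) (hP : P.IsHermitian) (ht : P.trace = 1) (he : P *ᵥ e ≠ 0)
    (hA : A = A * P + P * A) :
    sesq P e (A - sesq P e P A • P) (A - sesq P e P A • P) = (A * P * Aᴴ).trace := by
  set u := P *ᵥ e
  set d := star e ⬝ᵥ u
  have hd : d ≠ 0 := by
    rw [show d = star u ⬝ᵥ u from star_dotProduct_mulVec_eq_of_isIdempotentElem hid hP e]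
    exact dotProduct_star_self_eq_zero.not.mpr he
  have hrank : d • P = vecMulVec u (star u) := smul_eq_vecMulVec_of_trace_eq_one hid hP ht e
  have hPA : sesq P e P A • u = P *ᵥ A *ᵥ e := by
    have := congrArg (· *ᵥ A *ᵥ e) hrank
    simp only [smul_mulVec, vecMulVec_mulVec, op_smul_eq_smul] at this
    rw [sesq_eq_star_mulVec_dotProduct]
    change (star u ⬝ᵥ A *ᵥ e / d) • u = _
    rw [div_eq_inv_mul, mul_smul, ← this, inv_smul_smul₀ hd]
  have hAe : A *ᵥ e = A *ᵥ u + P *ᵥ A *ᵥ e := by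
    conv_lhs => rw [hA]
    rw [add_mulVec, mulVec_mulVec, mulVec_mulVec]
  have hDe : (A - sesq P e P A • P) *ᵥ e = A *ᵥ u := by
    rw [sub_mulVec, smul_mulVec, hPA, sub_eq_iff_eq_add]
    exact hAe
  have htr : d * (A * P * Aᴴ).trace = star (A *ᵥ u) ⬝ᵥ A *ᵥ u := by
    rw [← smul_eq_mul, ← trace_smul, ← Matrix.smul_mul, ← Matrix.mul_smul, hrank, mul_vecMulVec,
      vecMulVec_mul, trace_vecMulVec, ← star_mulVec, dotProduct_comm]
  rw [sesq_eq_star_mulVec_dotProduct, hDe, ← htr]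
  exact mul_div_cancel_left₀ _ hd

noncomputable def pdDir {N : ℕ} (f : ℝ × ℝ → Matrix (Fin N) (Fin N) ℂ) (p v : ℝ × ℝ) :
    Matrix (Fin N) (Fin N) ℂ :=
  Matrix.of fun i j => fderiv ℝ (fun q => f q i j) p v

section Leibniz

variable {N : ℕ} {f g : ℝ × ℝ → Matrix (Fin N) (Fin N) ℂ} {p : ℝ × ℝ}

theorem pdDir_mul (hf : ∀ i j, DifferentiableAt ℝ (fun q => f q i j) p)
    (hg : ∀ i j, DifferentiableAt ℝ (fun q => g q i j) p) (v : ℝ × ℝ) :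
    pdDir (fun q => f q * g q) p v = pdDir f p v * g p + f p * pdDir g p v := by
  ext i j
  simp only [pdDir, of_apply, mul_apply, Matrix.add_apply]
  rw [fderiv_fun_sum (A := fun k q => f q i k * g q k j) fun k _ => (hf i k).mul (hg k j),
    _root_.sum_apply, ← Finset.sum_add_distrib]
  refine Finset.sum_congr rfl fun k _ => ?_
  rw [fderiv_fun_mul (hf i k) (hg k j)]
  simp only [_root_.add_apply, _root_.smul_apply, smul_eq_mul]
  ring

theorem pdDir_conjTranspose (v : ℝ × ℝ) :
    pdDir (fun q => (f q)ᴴ) p v = (pdDir f p v)ᴴ := by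
  ext i j
  simp only [pdDir, conjTranspose_apply, of_apply, fderiv_star]
  rfl

theorem conjTranspose_pdp : (pdp f p)ᴴ = pdm (fun q => (f q)ᴴ) p := by
  simp only [pdp, pdm, pd1, pd2, ← pdDir.eq_def, pdDir_conjTranspose]
  simp [conjTranspose_smul, conjTranspose_sub, Complex.conj_I, sub_neg_eq_add]

end Leibniz

/-- Norms of the covariant derivatives of `P` as traces:
`‖D₊P‖² = tr(∂₊P · P · ∂₋P)` and `‖D₋P‖² = tr(∂₋P · P · ∂₊P)`; in particular these
quantities do not depend on the choice of `e`. -/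
theorem norm_sq_covariant_deriv {N : ℕ} (P : ℝ × ℝ → Matrix (Fin N) (Fin N) ℂ) (e : Fin N → ℂ)
    (hdiff : ∀ i j, Differentiable ℝ fun q => P q i j)
    (hidem : ∀ p, P p * P p = P p) (hherm : ∀ p, (P p)ᴴ = P p)
    (htr : ∀ p, Matrix.trace (P p) = 1) (he : ∀ p, (P p).mulVec e ≠ 0) :
    ∀ p : ℝ × ℝ,
      sesq (P p) e (Dp P e P p) (Dp P e P p) = Matrix.trace (pdp P p * P p * pdm P p) ∧
      sesq (P p) e (Dm P e P p) (Dm P e P p) = Matrix.trace (pdm P p * P p * pdp P p) := by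
  intro p
  have hdiffp : ∀ i j, DifferentiableAt ℝ (fun q => P q i j) p := fun i j => hdiff i j p
  have hpm : (pdp P p)ᴴ = pdm P p := by
    simpa only [hherm] using conjTranspose_pdp (f := P) (p := p)
  have hmp : (pdm P p)ᴴ = pdp P p := by rw [← hpm, conjTranspose_conjTranspose]
  have hLp : pdp P p = pdp P p * P p + P p * pdp P p := by
    simpa only [hidem] using pdp_mul hdiffp hdiffp
  have hLm : pdm P p = pdm P p * P p + P p * pdm P p := by
    simpa only [hidem] using pdm_mul hdiffp hdiffp
  constructor
  · rw [← hpm]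
    exact sesq_sub_sesq_smul_self_eq_trace (hidem p) (hherm p) (htr p) (he p) hLp
  · rw [← hmp]
    exact sesq_sub_sesq_smul_self_eq_trace (hidem p) (hherm p) (htr p) (he p) hLm
end

section
/- Let P be a twice-differentiable family of Hermitian rank-1 projectors with P e ≠ 0. The commutator of the covariant derivatives acting on any differentiable matrix family X satisfies [D₊, D₋]X = (‖D₊P‖² − ‖D₋P‖²)·X. -/
open Matrix

/-!
Write `D₊ = ∂₊ - a₊` and `D₋ = ∂₋ - a₋` with the scalar connection coefficients
`a± = ⟨P, ∂±P⟩ = e†P(∂±P)e / e†Pe`. Since `∂₊` and `∂₋` commute on `C²` functions,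
`[D₊, D₋]` is multiplication by the curvature `∂₋a₊ - ∂₊a₋`. In the quotient rule for this
curvature the mixed second derivatives of `P` cancel, and with `(∂₊P)ᴴ = ∂₋P` (from `Pᴴ = P`)
and `∂P = (∂P)P + P(∂P)` (from `P² = P`) the remaining terms are `‖D₊P‖² - ‖D₋P‖²`.
-/

/-- `c.1 ∂₁ + c.2 ∂₂`. Allowing arbitrary complex coefficients lets `∂₊` and `∂₋`, which are
`cderiv c` and `cderiv (star c)` for `c = (1/2, -i/2)`, be treated uniformly. -/
noncomputable def cderiv (c : ℂ × ℂ) (f : ℝ × ℝ → ℂ) (q : ℝ × ℝ) : ℂ :=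
  c.1 * fderiv ℝ f q (1, 0) + c.2 * fderiv ℝ f q (0, 1)

section cderiv

variable {c : ℂ × ℂ} {f g : ℝ × ℝ → ℂ} {q : ℝ × ℝ}

lemma cderiv_sub (hf : DifferentiableAt ℝ f q) (hg : DifferentiableAt ℝ g q) :
    cderiv c (fun x => f x - g x) q = cderiv c f q - cderiv c g q := by
  simp only [cderiv, fderiv_fun_sub hf hg, _root_.sub_apply]; ring

lemma cderiv_mul (hf : DifferentiableAt ℝ f q) (hg : DifferentiableAt ℝ g q) :
    cderiv c (fun x => f x * g x) q = cderiv c f q * g q + f q * cderiv c g q := by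
  simp only [cderiv, fderiv_fun_mul hf hg, _root_.add_apply,
    _root_.smul_apply, smul_eq_mul]
  ring

lemma cderiv_inv (hg : DifferentiableAt ℝ g q) (hg0 : g q ≠ 0) :
    cderiv c (fun x => (g x)⁻¹) q = -cderiv c g q / g q ^ 2 := by
  have h := ((hasFDerivAt_inv' (𝕜 := ℝ) hg0).comp q hg.hasFDerivAt).fderiv
  simp only [cderiv, show (fun x => (g x)⁻¹) = Inv.inv ∘ g from rfl, h]
  simp only [ContinuousLinearMap.neg_comp, _root_.neg_apply, ContinuousLinearMap.comp_apply,
    ContinuousLinearMap.mulLeftRight_apply]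
  field_simp
  ring

lemma cderiv_div (hf : DifferentiableAt ℝ f q) (hg : DifferentiableAt ℝ g q) (hg0 : g q ≠ 0) :
    cderiv c (fun x => f x / g x) q = (cderiv c f q * g q - f q * cderiv c g q) / g q ^ 2 := by
  rw [show (fun x => f x / g x) = fun x => f x * (g x)⁻¹ by simp only [div_eq_mul_inv],
    cderiv_mul hf (hg.fun_inv hg0), cderiv_inv hg hg0]
  field_simp; ring

lemma cderiv_sum {ι : Type*} {s : Finset ι} {F : ι → ℝ × ℝ → ℂ}
    (hF : ∀ i ∈ s, DifferentiableAt ℝ (F i) q) :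
    cderiv c (fun x => ∑ i ∈ s, F i x) q = ∑ i ∈ s, cderiv c (F i) q := by
  simp [cderiv, fderiv_fun_sum hF, Finset.mul_sum, Finset.sum_add_distrib]

lemma cderiv_const_mul (a : ℂ) (hf : DifferentiableAt ℝ f q) :
    cderiv c (fun x => a * f x) q = a * cderiv c f q := by
  simp only [cderiv, fderiv_const_mul hf, _root_.smul_apply, smul_eq_mul]; ring

lemma cderiv_mul_const (a : ℂ) (hf : DifferentiableAt ℝ f q) :
    cderiv c (fun x => f x * a) q = cderiv c f q * a := by
  simp only [cderiv, fderiv_mul_const hf, _root_.smul_apply, smul_eq_mul]; ring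

lemma star_cderiv (hf : DifferentiableAt ℝ f q) :
    star (cderiv c f q) = cderiv (star c) (fun x => star (f x)) q := by
  have h := (Complex.conjCLE.toContinuousLinearMap.hasFDerivAt.comp q hf.hasFDerivAt).fderiv
  simp only [cderiv, h,
    show (fun x => star (f x)) = Complex.conjCLE.toContinuousLinearMap ∘ f from rfl]
  simp

lemma differentiable_cderiv (hf : ContDiff ℝ 2 f) : Differentiable ℝ (cderiv c f) := by
  have hdf : ContDiff ℝ 1 (fderiv ℝ f) := hf.fderiv_right (m := 1) (by norm_num)
  exact ((contDiff_const.mul (hdf.clm_apply contDiff_const)).add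
    (contDiff_const.mul (hdf.clm_apply contDiff_const))).differentiable one_ne_zero

lemma fderiv_cderiv_apply (hf : ContDiff ℝ 2 f) (v : ℝ × ℝ) :
    fderiv ℝ (cderiv c f) q v =
      c.1 * fderiv ℝ (fderiv ℝ f) q v (1, 0) + c.2 * fderiv ℝ (fderiv ℝ f) q v (0, 1) := by
  have hdf : HasFDerivAt (fderiv ℝ f) (fderiv ℝ (fderiv ℝ f) q) q :=
    ((hf.fderiv_right (m := 1) (by norm_num)).differentiable one_ne_zero q).hasFDerivAt
  have h := (((hdf.clm_apply (hasFDerivAt_const (1, 0) q)).const_mul c.1).fun_add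
    ((hdf.clm_apply (hasFDerivAt_const (0, 1) q)).const_mul c.2)).fderiv
  change fderiv ℝ (fun x => c.1 * fderiv ℝ f x (1, 0) + c.2 * fderiv ℝ f x (0, 1)) q v = _
  rw [h]; simp

lemma cderiv_comm (hf : ContDiff ℝ 2 f) (d : ℂ × ℂ) :
    cderiv c (cderiv d f) q = cderiv d (cderiv c f) q := by
  have hsymm := hf.contDiffAt.isSymmSndFDerivAt (x := q) (by norm_num)
  change c.1 * fderiv ℝ (cderiv d f) q (1, 0) + c.2 * fderiv ℝ (cderiv d f) q (0, 1) =
    d.1 * fderiv ℝ (cderiv c f) q (1, 0) + d.2 * fderiv ℝ (cderiv c f) q (0, 1)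
  simp only [fderiv_cderiv_apply hf, hsymm (1, 0) (0, 1)]
  ring

end cderiv

noncomputable def mderiv {m n : Type*} (c : ℂ × ℂ) (F : ℝ × ℝ → Matrix m n ℂ) (q : ℝ × ℝ) :
    Matrix m n ℂ :=
  Matrix.of fun i j => cderiv c (fun x => F x i j) q

section mderiv

variable {l m n : Type*} {c : ℂ × ℂ} {q : ℝ × ℝ}

@[simp]
lemma mderiv_apply (F : ℝ × ℝ → Matrix m n ℂ) (i : m) (j : n) :
    mderiv c F q i j = cderiv c (fun x => F x i j) q := rfl

lemma mderiv_sub {F G : ℝ × ℝ → Matrix m n ℂ}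
    (hF : ∀ i j, DifferentiableAt ℝ (fun x => F x i j) q)
    (hG : ∀ i j, DifferentiableAt ℝ (fun x => G x i j) q) :
    mderiv c (fun x => F x - G x) q = mderiv c F q - mderiv c G q := by
  ext i j
  exact cderiv_sub (hF i j) (hG i j)

lemma mderiv_smul {a : ℝ × ℝ → ℂ} {F : ℝ × ℝ → Matrix m n ℂ} (ha : DifferentiableAt ℝ a q)
    (hF : ∀ i j, DifferentiableAt ℝ (fun x => F x i j) q) :
    mderiv c (fun x => a x • F x) q = cderiv c a q • F q + a q • mderiv c F q := by
  ext i j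
  exact cderiv_mul ha (hF i j)

lemma differentiableAt_mul_apply [Fintype m] {F : ℝ × ℝ → Matrix l m ℂ}
    {G : ℝ × ℝ → Matrix m n ℂ} (hF : ∀ i j, DifferentiableAt ℝ (fun x => F x i j) q)
    (hG : ∀ i j, DifferentiableAt ℝ (fun x => G x i j) q) (i : l) (j : n) :
    DifferentiableAt ℝ (fun x => (F x * G x) i j) q := by
  simp only [Matrix.mul_apply]
  fun_prop

lemma mderiv_mul [Fintype m] {F : ℝ × ℝ → Matrix l m ℂ} {G : ℝ × ℝ → Matrix m n ℂ}
    (hF : ∀ i j, DifferentiableAt ℝ (fun x => F x i j) q)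
    (hG : ∀ i j, DifferentiableAt ℝ (fun x => G x i j) q) :
    mderiv c (fun x => F x * G x) q = mderiv c F q * G q + F q * mderiv c G q := by
  ext i j
  simp only [mderiv_apply, Matrix.mul_apply, Matrix.add_apply]
  rw [cderiv_sum fun k _ => (hF i k).fun_mul (hG k j), ← Finset.sum_add_distrib]
  exact Finset.sum_congr rfl fun k _ => cderiv_mul (hF i k) (hG k j)

lemma conjTranspose_mderiv {F : ℝ × ℝ → Matrix m n ℂ}
    (hF : ∀ i j, DifferentiableAt ℝ (fun x => F x i j) q) :
    (mderiv c F q)ᴴ = mderiv (star c) (fun x => (F x)ᴴ) q := by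
  ext i j
  exact star_cderiv (hF j i)

lemma mderiv_comm {F : ℝ × ℝ → Matrix m n ℂ} (hF : ∀ i j, ContDiff ℝ 2 fun x => F x i j)
    (d : ℂ × ℂ) : mderiv c (mderiv d F) q = mderiv d (mderiv c F) q := by
  ext i j
  exact cderiv_comm (hF i j) d

lemma mderiv_eq_of_idempotent [Fintype l] {P : ℝ × ℝ → Matrix l l ℂ}
    (hidem : ∀ x, P x * P x = P x)
    (hP : ∀ i j, DifferentiableAt ℝ (fun x => P x i j) q) :
    mderiv c P q = mderiv c P q * P q + P q * mderiv c P q := by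
  have h := mderiv_mul (c := c) hP hP
  simp only [hidem] at h
  exact h

end mderiv

noncomputable def covDeriv {m n : Type*} (c : ℂ × ℂ) (a : ℝ × ℝ → ℂ)
    (X : ℝ × ℝ → Matrix m n ℂ) (q : ℝ × ℝ) : Matrix m n ℂ :=
  mderiv c X q - a q • X q

lemma covDeriv_commutator {m n : Type*} {c d : ℂ × ℂ} {a b : ℝ × ℝ → ℂ}
    {X : ℝ × ℝ → Matrix m n ℂ} {q : ℝ × ℝ} (hX : ∀ i j, ContDiff ℝ 2 fun x => X x i j)
    (ha : DifferentiableAt ℝ a q) (hb : DifferentiableAt ℝ b q) :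
    covDeriv c a (covDeriv d b X) q - covDeriv d b (covDeriv c a X) q =
      (cderiv d a q - cderiv c b q) • X q := by
  have hX' : ∀ i j, DifferentiableAt ℝ (fun x => X x i j) q :=
    fun i j => (hX i j).differentiable two_ne_zero q
  have hdX : ∀ (c' : ℂ × ℂ) i j, DifferentiableAt ℝ (fun x => mderiv c' X x i j) q :=
    fun _ i j => differentiable_cderiv (hX i j) q
  have hsmul : ∀ {f : ℝ × ℝ → ℂ}, DifferentiableAt ℝ f q →
      ∀ i j, DifferentiableAt ℝ (fun x => (f x • X x) i j) q :=
    fun hf i j => hf.mul (hX' i j)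
  unfold covDeriv
  rw [mderiv_sub (hdX d) (hsmul hb), mderiv_sub (hdX c) (hsmul ha), mderiv_smul hb hX',
    mderiv_smul ha hX', mderiv_comm hX d]
  module

def expectation {n : Type*} [Fintype n] (e : n → ℂ) : Matrix n n ℂ →ₗ[ℂ] ℂ where
  toFun M := star e ⬝ᵥ M *ᵥ e
  map_add' M M' := by simp [Matrix.add_mulVec]
  map_smul' a M := by simp [Matrix.smul_mulVec]

section expectation

variable {n : Type*} [Fintype n] {e : n → ℂ}

lemma expectation_apply (M : Matrix n n ℂ) : expectation e M = star e ⬝ᵥ M *ᵥ e := rfl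

lemma star_expectation (M : Matrix n n ℂ) : star (expectation e M) = expectation e Mᴴ := by
  rw [expectation_apply, expectation_apply, star_dotProduct (w := Mᴴ *ᵥ e), Matrix.star_mulVec,
    Matrix.conjTranspose_conjTranspose, ← Matrix.dotProduct_mulVec]

open scoped ComplexOrder in
lemma expectation_ne_zero {P : Matrix n n ℂ} (hidem : P * P = P) (hherm : Pᴴ = P)
    (he : P *ᵥ e ≠ 0) : expectation e P ≠ 0 := by
  have h : expectation e P = star (P *ᵥ e) ⬝ᵥ P *ᵥ e := by
    conv_lhs => rw [expectation_apply, ← hidem]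
    rw [← Matrix.mulVec_mulVec, Matrix.dotProduct_mulVec, Matrix.star_mulVec, hherm]
  rwa [h, Ne, dotProduct_star_self_eq_zero]

variable {q : ℝ × ℝ} {F : ℝ × ℝ → Matrix n n ℂ}

lemma differentiableAt_expectation (hF : ∀ i j, DifferentiableAt ℝ (fun x => F x i j) q) :
    DifferentiableAt ℝ (fun x => expectation e (F x)) q := by
  simp only [expectation_apply, dotProduct, Matrix.mulVec]
  fun_prop

lemma cderiv_expectation {c : ℂ × ℂ} (hF : ∀ i j, DifferentiableAt ℝ (fun x => F x i j) q) :
    cderiv c (fun x => expectation e (F x)) q = expectation e (mderiv c F q) := by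
  simp only [expectation_apply, dotProduct, Matrix.mulVec]
  rw [cderiv_sum fun i _ => by fun_prop]
  refine Finset.sum_congr rfl fun i _ => ?_
  rw [cderiv_const_mul _ (by fun_prop), cderiv_sum fun j _ => by fun_prop]
  congr 1
  exact Finset.sum_congr rfl fun j _ => cderiv_mul_const _ (hF i j)

end expectation

section connection

variable {N : ℕ} {P : ℝ × ℝ → Matrix (Fin N) (Fin N) ℂ} {e : Fin N → ℂ}

noncomputable def wirtinger : ℂ × ℂ := (1 / 2, -Complex.I / 2)

lemma pdp_eq_mderiv (F : ℝ × ℝ → Matrix (Fin N) (Fin N) ℂ) :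
    pdp F = mderiv wirtinger F := by
  ext p i j
  simp only [pdp, pd1, pd2, mderiv_apply, cderiv, wirtinger, Matrix.smul_apply, Matrix.sub_apply,
    Matrix.of_apply, smul_eq_mul]
  ring

lemma pdm_eq_mderiv (F : ℝ × ℝ → Matrix (Fin N) (Fin N) ℂ) :
    pdm F = mderiv (star wirtinger) F := by
  ext p i j
  simp only [pdm, pd1, pd2, mderiv_apply, cderiv, wirtinger, Matrix.smul_apply, Matrix.add_apply,
    Matrix.of_apply, smul_eq_mul, Prod.fst_star, Prod.snd_star, star_div₀, star_neg,
    Complex.star_def, Complex.conj_I, map_one, map_ofNat]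
  ring

lemma sesq_eq_expectation_div {P X Y : Matrix (Fin N) (Fin N) ℂ} :
    sesq P e X Y = expectation e (Xᴴ * Y) / expectation e P := rfl

noncomputable def connCoeff (c : ℂ × ℂ) (P : ℝ × ℝ → Matrix (Fin N) (Fin N) ℂ) (e : Fin N → ℂ)
    (q : ℝ × ℝ) : ℂ :=
  sesq (P q) e (P q) (mderiv c P q)

lemma Dp_eq_covDeriv : Dp P e = covDeriv wirtinger (connCoeff wirtinger P e) := by
  ext X p : 2
  simp only [Dp, covDeriv, connCoeff, pdp_eq_mderiv]

lemma Dm_eq_covDeriv : Dm P e = covDeriv (star wirtinger) (connCoeff (star wirtinger) P e) := by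
  ext X p : 2
  simp only [Dm, covDeriv, connCoeff, pdm_eq_mderiv]

lemma connCoeff_eq (hherm : ∀ q, (P q)ᴴ = P q) (c : ℂ × ℂ) :
    connCoeff c P e = fun q => expectation e (P q * mderiv c P q) / expectation e (P q) := by
  ext q
  rw [connCoeff, sesq_eq_expectation_div, hherm]

variable {c d : ℂ × ℂ} {q : ℝ × ℝ}

lemma differentiableAt_connCoeff (hP : ∀ i j, ContDiff ℝ 2 fun x => P x i j)
    (hherm : ∀ q, (P q)ᴴ = P q) (hs : expectation e (P q) ≠ 0) :
    DifferentiableAt ℝ (connCoeff c P e) q := by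
  have hP' : ∀ i j, DifferentiableAt ℝ (fun x => P x i j) q :=
    fun i j => (hP i j).differentiable two_ne_zero q
  simp only [connCoeff_eq hherm, div_eq_mul_inv]
  exact (differentiableAt_expectation (differentiableAt_mul_apply hP' fun i j =>
    differentiable_cderiv (hP i j) q)).mul ((differentiableAt_expectation hP').inv hs)

lemma cderiv_connCoeff (hP : ∀ i j, ContDiff ℝ 2 fun x => P x i j)
    (hherm : ∀ q, (P q)ᴴ = P q) (hs : expectation e (P q) ≠ 0) :
    cderiv d (connCoeff c P e) q =
      (expectation e (mderiv d P q * mderiv c P q + P q * mderiv d (mderiv c P) q) *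
          expectation e (P q) -
        expectation e (P q * mderiv c P q) * expectation e (mderiv d P q)) /
        expectation e (P q) ^ 2 := by
  have hP' : ∀ i j, DifferentiableAt ℝ (fun x => P x i j) q :=
    fun i j => (hP i j).differentiable two_ne_zero q
  have hdP : ∀ i j, DifferentiableAt ℝ (fun x => mderiv c P x i j) q :=
    fun i j => differentiable_cderiv (hP i j) q
  have hPdP := differentiableAt_mul_apply hP' hdP
  rw [connCoeff_eq hherm, cderiv_div (differentiableAt_expectation hPdP)
    (differentiableAt_expectation hP') hs, cderiv_expectation hPdP,
    cderiv_expectation hP', mderiv_mul hP' hdP]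

end connection

section curvature

variable {N : ℕ} {e : Fin N → ℂ}

lemma sesq_sub_smul_self {P Q R : Matrix (Fin N) (Fin N) ℂ} (hidem : P * P = P)
    (hherm : Pᴴ = P) (hQR : Qᴴ = R) (hs : expectation e P ≠ 0) :
    sesq P e (Q - sesq P e P Q • P) (Q - sesq P e P Q • P) =
      (expectation e (R * Q) -
        expectation e (P * Q) * expectation e (R * P) / expectation e P) / expectation e P := by
  have hconj : star (sesq P e P Q) = expectation e (R * P) / expectation e P := by
    rw [sesq_eq_expectation_div, hherm, star_div₀, star_expectation, star_expectation,
      Matrix.conjTranspose_mul, hherm, hQR]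
  rw [sesq_eq_expectation_div (X := Q - _), Matrix.conjTranspose_sub, Matrix.conjTranspose_smul,
    hconj, hQR, hherm]
  simp only [Matrix.sub_mul, Matrix.mul_sub, smul_mul_assoc, mul_smul_comm, hidem,
    map_sub, map_smul, smul_eq_mul, sesq_eq_expectation_div, hherm]
  field_simp
  ring

variable {P : ℝ × ℝ → Matrix (Fin N) (Fin N) ℂ} {c : ℂ × ℂ} {q : ℝ × ℝ}

lemma cderiv_connCoeff_sub_cderiv_connCoeff (hP : ∀ i j, ContDiff ℝ 2 fun x => P x i j)
    (hidem : ∀ q, P q * P q = P q) (hherm : ∀ q, (P q)ᴴ = P q)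
    (hs : expectation e (P q) ≠ 0) :
    cderiv (star c) (connCoeff c P e) q - cderiv c (connCoeff (star c) P e) q =
      sesq (P q) e (covDeriv c (connCoeff c P e) P q) (covDeriv c (connCoeff c P e) P q) -
        sesq (P q) e (covDeriv (star c) (connCoeff (star c) P e) P q)
          (covDeriv (star c) (connCoeff (star c) P e) P q) := by
  have hP' : ∀ i j, DifferentiableAt ℝ (fun x => P x i j) q :=
    fun i j => (hP i j).differentiable two_ne_zero q
  have hadj : (mderiv c P q)ᴴ = mderiv (star c) P q := by
    rw [conjTranspose_mderiv hP']
    simp only [hherm]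
  have hadj' : (mderiv (star c) P q)ᴴ = mderiv c P q := by
    rw [← hadj, Matrix.conjTranspose_conjTranspose]
  have hsplit : ∀ c', expectation e (mderiv c' P q) =
      expectation e (mderiv c' P q * P q) + expectation e (P q * mderiv c' P q) := fun c' => by
    rw [← map_add, ← mderiv_eq_of_idempotent hidem hP']
  rw [cderiv_connCoeff hP hherm hs, cderiv_connCoeff hP hherm hs]
  simp only [covDeriv, connCoeff]
  rw [sesq_sub_smul_self (hidem q) (hherm q) hadj hs,
    sesq_sub_smul_self (hidem q) (hherm q) hadj' hs, mderiv_comm hP, hsplit c, hsplit (star c),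
    map_add, map_add]
  field_simp
  ring

end curvature

theorem covariant_deriv_commutator_general {N : ℕ}
    (P X : ℝ × ℝ → Matrix (Fin N) (Fin N) ℂ) (e : Fin N → ℂ)
    (hPdiff : ∀ i j, ContDiff ℝ 2 fun q => P q i j)
    (hXdiff : ∀ i j, ContDiff ℝ 2 fun q => X q i j)
    (hidem : ∀ p, P p * P p = P p) (hherm : ∀ p, (P p)ᴴ = P p)
    (he : ∀ p, (P p).mulVec e ≠ 0) :
    ∀ p : ℝ × ℝ,
      Dp P e (fun q => Dm P e X q) p - Dm P e (fun q => Dp P e X q) p =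
        (sesq (P p) e (Dp P e P p) (Dp P e P p) -
          sesq (P p) e (Dm P e P p) (Dm P e P p)) • X p := by
  intro p
  have hs := expectation_ne_zero (e := e) (hidem p) (hherm p) (he p)
  rw [Dp_eq_covDeriv, Dm_eq_covDeriv,
    covDeriv_commutator hXdiff (differentiableAt_connCoeff hPdiff hherm hs)
      (differentiableAt_connCoeff hPdiff hherm hs),
    cderiv_connCoeff_sub_cderiv_connCoeff hPdiff hidem hherm hs]

/-- The commutator of the covariant derivatives:
`[D₊,D₋]X = (‖D₊P‖² − ‖D₋P‖²) • X`. -/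
theorem covariant_deriv_commutator {N : ℕ}
    (P X : ℝ × ℝ → Matrix (Fin N) (Fin N) ℂ) (e : Fin N → ℂ)
    (hPdiff : ∀ i j, ContDiff ℝ 2 fun q => P q i j)
    (hXdiff : ∀ i j, ContDiff ℝ 2 fun q => X q i j)
    (hidem : ∀ p, P p * P p = P p) (hherm : ∀ p, (P p)ᴴ = P p)
    (htr : ∀ p, Matrix.trace (P p) = 1) (he : ∀ p, (P p).mulVec e ≠ 0) :
    ∀ p : ℝ × ℝ,
      Dp P e (fun q => Dm P e X q) p - Dm P e (fun q => Dp P e X q) p =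
        (sesq (P p) e (Dp P e P p) (Dp P e P p) -
          sesq (P p) e (Dm P e P p) (Dm P e P p)) • X p :=
  covariant_deriv_commutator_general P X e hPdiff hXdiff hidem hherm he
end

section
/- Let P be a solution of the Euler–Lagrange equation [∂₊∂₋P, P] = 0 with P a Hermitian rank-1 projector family, and suppose Π₊P ≠ 0 where Π₊P = ((∂₊P)·P·(∂₋P))/tr((∂₊P)·P·(∂₋P)). Then Π₋(Π₊P) = P: the lowering operator inverts the raising operator on solutions. -/
open Matrix

/-- The raising operator `Π₊X`. -/
noncomputable def Pip {N : ℕ} (X : ℝ × ℝ → Matrix (Fin N) (Fin N) ℂ) (p : ℝ × ℝ) :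
    Matrix (Fin N) (Fin N) ℂ :=
  if Matrix.trace (pdp X p * X p * pdm X p) = 0 then 0
  else (Matrix.trace (pdp X p * X p * pdm X p))⁻¹ • (pdp X p * X p * pdm X p)

/-- The lowering operator `Π₋X`. -/
noncomputable def Pim {N : ℕ} (X : ℝ × ℝ → Matrix (Fin N) (Fin N) ℂ) (p : ℝ × ℝ) :
    Matrix (Fin N) (Fin N) ℂ :=
  if Matrix.trace (pdm X p * X p * pdp X p) = 0 then 0
  else (Matrix.trace (pdm X p * X p * pdp X p))⁻¹ • (pdm X p * X p * pdp X p)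

/-- The mixed derivative `∂₊∂₋P`. -/
noncomputable def pdpm {N : ℕ} (f : ℝ × ℝ → Matrix (Fin N) (Fin N) ℂ) (p : ℝ × ℝ) :
    Matrix (Fin N) (Fin N) ℂ :=
  pdp (fun q => pdm f q) p

namespace CPAux

variable {N : ℕ}

/-- Entrywise directional derivative. -/
noncomputable def pdv (v : ℝ × ℝ) (f : ℝ × ℝ → Matrix (Fin N) (Fin N) ℂ) (p : ℝ × ℝ) :
    Matrix (Fin N) (Fin N) ℂ :=
  Matrix.of fun i j => fderiv ℝ (fun q => f q i j) p v

lemma pdv_apply (v : ℝ × ℝ) (f : ℝ × ℝ → Matrix (Fin N) (Fin N) ℂ) (p : ℝ × ℝ) (i j : Fin N) :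
    pdv v f p i j = fderiv ℝ (fun q => f q i j) p v := rfl

/-- All entries smooth. -/
def MDiff (f : ℝ × ℝ → Matrix (Fin N) (Fin N) ℂ) : Prop :=
  ∀ i j, ContDiff ℝ (⊤ : ℕ∞) fun q => f q i j

lemma MDiff.diffAt {f : ℝ × ℝ → Matrix (Fin N) (Fin N) ℂ} (hf : MDiff f) (i j : Fin N)
    (p : ℝ × ℝ) : DifferentiableAt ℝ (fun q => f q i j) p :=
  ((hf i j).differentiable (by simp)).differentiableAt

lemma mdiff_mul {f g : ℝ × ℝ → Matrix (Fin N) (Fin N) ℂ} (hf : MDiff f) (hg : MDiff g) :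
    MDiff (fun q => f q * g q) := by
  intro i j
  have h : (fun q => (f q * g q) i j) = fun q => ∑ k, f q i k * g q k j := by
    funext q; simp [Matrix.mul_apply]
  rw [h]
  exact ContDiff.sum fun k _ => (hf i k).mul (hg k j)

lemma mdiff_pdv {f : ℝ × ℝ → Matrix (Fin N) (Fin N) ℂ} (hf : MDiff f) (v : ℝ × ℝ) :
    MDiff (fun q => pdv v f q) := by
  intro i j
  have h1 : ContDiff ℝ (⊤ : ℕ∞) (fderiv ℝ (fun q => f q i j)) :=
    (hf i j).fderiv_right (by simp)
  exact h1.clm_apply contDiff_const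

lemma mdiff_csmul {f : ℝ × ℝ → Matrix (Fin N) (Fin N) ℂ} (hf : MDiff f) (c : ℂ) :
    MDiff (fun q => c • f q) := by
  intro i j
  have : (fun q => (c • f q) i j) = fun q => c * f q i j := rfl
  rw [this]
  exact (contDiff_const).mul (hf i j)

lemma mdiff_add {f g : ℝ × ℝ → Matrix (Fin N) (Fin N) ℂ} (hf : MDiff f) (hg : MDiff g) :
    MDiff (fun q => f q + g q) := fun i j => (hf i j).add (hg i j)

lemma mdiff_sub {f g : ℝ × ℝ → Matrix (Fin N) (Fin N) ℂ} (hf : MDiff f) (hg : MDiff g) :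
    MDiff (fun q => f q - g q) := fun i j => (hf i j).sub (hg i j)

lemma pdv_mul {f g : ℝ × ℝ → Matrix (Fin N) (Fin N) ℂ} (hf : MDiff f) (hg : MDiff g)
    (v : ℝ × ℝ) (p : ℝ × ℝ) :
    pdv v (fun q => f q * g q) p = pdv v f p * g p + f p * pdv v g p := by
  ext i j
  have h : (fun q => (f q * g q) i j) = fun q => ∑ k, f q i k * g q k j := by
    funext q; simp [Matrix.mul_apply]
  have hd : ∀ k ∈ Finset.univ, DifferentiableAt ℝ (fun q => f q i k * g q k j) p :=
    fun k _ => (hf.diffAt i k p).mul (hg.diffAt k j p)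
  simp only [Matrix.add_apply, Matrix.mul_apply, pdv_apply, h, fderiv_fun_sum hd,
    ContinuousLinearMap.coe_sum', Finset.sum_apply]
  rw [← Finset.sum_add_distrib]
  congr 1
  funext k
  rw [fderiv_fun_mul (hf.diffAt i k p) (hg.diffAt k j p)]
  simp only [ContinuousLinearMap.add_apply, ContinuousLinearMap.smul_apply, smul_eq_mul]
  ring

lemma pdv_add {f g : ℝ × ℝ → Matrix (Fin N) (Fin N) ℂ} (hf : MDiff f) (hg : MDiff g)
    (v : ℝ × ℝ) (p : ℝ × ℝ) :
    pdv v (fun q => f q + g q) p = pdv v f p + pdv v g p := by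
  ext i j
  simp only [pdv_apply, Matrix.add_apply]
  rw [fderiv_fun_add (hf.diffAt i j p) (hg.diffAt i j p)]
  rfl

lemma pdv_sub {f g : ℝ × ℝ → Matrix (Fin N) (Fin N) ℂ} (hf : MDiff f) (hg : MDiff g)
    (v : ℝ × ℝ) (p : ℝ × ℝ) :
    pdv v (fun q => f q - g q) p = pdv v f p - pdv v g p := by
  ext i j
  simp only [pdv_apply, Matrix.sub_apply]
  rw [fderiv_fun_sub (hf.diffAt i j p) (hg.diffAt i j p)]
  rfl

lemma pdv_csmul {f : ℝ × ℝ → Matrix (Fin N) (Fin N) ℂ} (hf : MDiff f) (c : ℂ)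
    (v : ℝ × ℝ) (p : ℝ × ℝ) :
    pdv v (fun q => c • f q) p = c • pdv v f p := by
  ext i j
  simp only [pdv_apply, Matrix.smul_apply]
  rw [fderiv_fun_const_smul (hf.diffAt i j p) c]
  rfl

lemma pdv_smul {c : ℝ × ℝ → ℂ} {f : ℝ × ℝ → Matrix (Fin N) (Fin N) ℂ} {p : ℝ × ℝ}
    (hc : DifferentiableAt ℝ c p) (hf : ∀ i j, DifferentiableAt ℝ (fun q => f q i j) p)
    (v : ℝ × ℝ) :
    pdv v (fun q => c q • f q) p = (fderiv ℝ c p v) • f p + c p • pdv v f p := by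
  ext i j
  simp only [pdv_apply, Matrix.add_apply, Matrix.smul_apply]
  simp only [smul_eq_mul]
  rw [fderiv_fun_mul hc (hf i j)]
  simp only [ContinuousLinearMap.add_apply, ContinuousLinearMap.smul_apply, smul_eq_mul]
  ring

lemma trace_pdv {f : ℝ × ℝ → Matrix (Fin N) (Fin N) ℂ} {p : ℝ × ℝ}
    (hf : ∀ i j, DifferentiableAt ℝ (fun q => f q i j) p) (v : ℝ × ℝ) :
    (pdv v f p).trace = fderiv ℝ (fun q => (f q).trace) p v := by
  have h : (fun q => (f q).trace) = fun q => ∑ i, f q i i := by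
    funext q; rfl
  rw [h, fderiv_fun_sum (fun i _ => hf i i)]
  simp [Matrix.trace, Matrix.diag, pdv_apply]

lemma pdv_swap {f : ℝ × ℝ → Matrix (Fin N) (Fin N) ℂ} (hf : MDiff f) (v w : ℝ × ℝ)
    (p : ℝ × ℝ) : pdv v (fun q => pdv w f q) p = pdv w (fun q => pdv v f q) p := by
  ext i j
  simp only [pdv_apply]
  have key : ∀ u z : ℝ × ℝ, fderiv ℝ (fun q => fderiv ℝ (fun r => f r i j) q u) p z
      = fderiv ℝ (fderiv ℝ (fun r => f r i j)) p z u := by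
    intro u z
    have hd : DifferentiableAt ℝ (fderiv ℝ (fun r => f r i j)) p :=
      (((hf i j).fderiv_right (m := (⊤ : ℕ∞)) (by simp)).differentiable (by simp)).differentiableAt
    rw [fderiv_clm_apply hd (differentiableAt_const u)]
    simp
  have hsymm : IsSymmSndFDerivAt ℝ (fun r => f r i j) p :=
    ((hf i j).contDiffAt).isSymmSndFDerivAt (by rw [minSmoothness_of_isRCLikeNormedField]; exact WithTop.coe_le_coe.mpr le_top)
  rw [key w v, key v w, hsymm v w]

/- pdp / pdm expressed via pdv -/
lemma pdp_eq (f : ℝ × ℝ → Matrix (Fin N) (Fin N) ℂ) (p : ℝ × ℝ) :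
    pdp f p = ((1 : ℂ) / 2) • (pdv (1, 0) f p - Complex.I • pdv (0, 1) f p) := rfl

lemma pdm_eq (f : ℝ × ℝ → Matrix (Fin N) (Fin N) ℂ) (p : ℝ × ℝ) :
    pdm f p = ((1 : ℂ) / 2) • (pdv (1, 0) f p + Complex.I • pdv (0, 1) f p) := rfl

lemma mdiff_pdp {f : ℝ × ℝ → Matrix (Fin N) (Fin N) ℂ} (hf : MDiff f) :
    MDiff (fun q => pdp f q) := by
  have : (fun q => pdp f q)
      = fun q => ((1 : ℂ) / 2) • (pdv (1, 0) f q - Complex.I • pdv (0, 1) f q) := rfl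
  rw [this]
  exact mdiff_csmul (mdiff_sub (mdiff_pdv hf _) (mdiff_csmul (mdiff_pdv hf _) _)) _

lemma mdiff_pdm {f : ℝ × ℝ → Matrix (Fin N) (Fin N) ℂ} (hf : MDiff f) :
    MDiff (fun q => pdm f q) := by
  have : (fun q => pdm f q)
      = fun q => ((1 : ℂ) / 2) • (pdv (1, 0) f q + Complex.I • pdv (0, 1) f q) := rfl
  rw [this]
  exact mdiff_csmul (mdiff_add (mdiff_pdv hf _) (mdiff_csmul (mdiff_pdv hf _) _)) _

lemma pdp_mul {f g : ℝ × ℝ → Matrix (Fin N) (Fin N) ℂ} (hf : MDiff f) (hg : MDiff g)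
    (p : ℝ × ℝ) :
    pdp (fun q => f q * g q) p = pdp f p * g p + f p * pdp g p := by
  rw [pdp_eq, pdp_eq, pdp_eq, pdv_mul hf hg, pdv_mul hf hg]
  simp only [smul_sub, smul_add, sub_mul, add_mul, mul_sub, mul_add,
    smul_mul_assoc, mul_smul_comm]
  abel

lemma pdm_mul {f g : ℝ × ℝ → Matrix (Fin N) (Fin N) ℂ} (hf : MDiff f) (hg : MDiff g)
    (p : ℝ × ℝ) :
    pdm (fun q => f q * g q) p = pdm f p * g p + f p * pdm g p := by
  rw [pdm_eq, pdm_eq, pdm_eq, pdv_mul hf hg, pdv_mul hf hg]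
  simp only [smul_sub, smul_add, sub_mul, add_mul, mul_sub, mul_add,
    smul_mul_assoc, mul_smul_comm]
  abel

lemma pdm_add {f g : ℝ × ℝ → Matrix (Fin N) (Fin N) ℂ} (hf : MDiff f) (hg : MDiff g)
    (p : ℝ × ℝ) :
    pdm (fun q => f q + g q) p = pdm f p + pdm g p := by
  rw [pdm_eq, pdm_eq, pdm_eq, pdv_add hf hg, pdv_add hf hg]
  simp only [smul_add]
  abel

/-- scalar `∂₋` -/
noncomputable def sdm (c : ℝ × ℝ → ℂ) (p : ℝ × ℝ) : ℂ :=
  ((1 : ℂ) / 2) * (fderiv ℝ c p (1, 0) + Complex.I * fderiv ℝ c p (0, 1))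

/-- scalar `∂₊` -/
noncomputable def sdp (c : ℝ × ℝ → ℂ) (p : ℝ × ℝ) : ℂ :=
  ((1 : ℂ) / 2) * (fderiv ℝ c p (1, 0) - Complex.I * fderiv ℝ c p (0, 1))

lemma pdm_smul {c : ℝ × ℝ → ℂ} {f : ℝ × ℝ → Matrix (Fin N) (Fin N) ℂ} {p : ℝ × ℝ}
    (hc : DifferentiableAt ℝ c p) (hf : ∀ i j, DifferentiableAt ℝ (fun q => f q i j) p) :
    pdm (fun q => c q • f q) p = sdm c p • f p + c p • pdm f p := by
  rw [pdm_eq, pdm_eq, pdv_smul hc hf, pdv_smul hc hf, sdm]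
  module

lemma pdp_smul {c : ℝ × ℝ → ℂ} {f : ℝ × ℝ → Matrix (Fin N) (Fin N) ℂ} {p : ℝ × ℝ}
    (hc : DifferentiableAt ℝ c p) (hf : ∀ i j, DifferentiableAt ℝ (fun q => f q i j) p) :
    pdp (fun q => c q • f q) p = sdp c p • f p + c p • pdp f p := by
  rw [pdp_eq, pdp_eq, pdv_smul hc hf, pdv_smul hc hf, sdp]
  module

lemma trace_pdm {f : ℝ × ℝ → Matrix (Fin N) (Fin N) ℂ} {p : ℝ × ℝ}
    (hf : ∀ i j, DifferentiableAt ℝ (fun q => f q i j) p) :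
    (pdm f p).trace = sdm (fun q => (f q).trace) p := by
  rw [pdm_eq, sdm]
  simp only [Matrix.trace_smul, Matrix.trace_add, trace_pdv hf, smul_eq_mul]

lemma trace_pdp {f : ℝ × ℝ → Matrix (Fin N) (Fin N) ℂ} {p : ℝ × ℝ}
    (hf : ∀ i j, DifferentiableAt ℝ (fun q => f q i j) p) :
    (pdp f p).trace = sdp (fun q => (f q).trace) p := by
  rw [pdp_eq, sdp]
  simp only [Matrix.trace_smul, Matrix.trace_sub, trace_pdv hf, smul_eq_mul]

lemma pdm_pdp_comm {f : ℝ × ℝ → Matrix (Fin N) (Fin N) ℂ} (hf : MDiff f) (p : ℝ × ℝ) :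
    pdm (fun q => pdp f q) p = pdpm f p := by
  have hpdv : ∀ v : ℝ × ℝ, MDiff (fun q => pdv v f q) := fun v => mdiff_pdv hf v
  have expand_p : ∀ v, pdv v (fun q => pdp f q) p
      = ((1 : ℂ)/2) • (pdv v (fun q => pdv (1,0) f q) p
        - Complex.I • pdv v (fun q => pdv (0,1) f q) p) := by
    intro v
    have h1 : (fun q => pdp f q)
        = fun q => ((1 : ℂ)/2) • (pdv (1,0) f q - Complex.I • pdv (0,1) f q) := rfl
    rw [h1, pdv_csmul (mdiff_sub (mdiff_pdv hf _) (mdiff_csmul (mdiff_pdv hf _) _)) _,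
      pdv_sub (mdiff_pdv hf _) (mdiff_csmul (mdiff_pdv hf _) _), pdv_csmul (mdiff_pdv hf _)]
  have expand_m : ∀ v, pdv v (fun q => pdm f q) p
      = ((1 : ℂ)/2) • (pdv v (fun q => pdv (1,0) f q) p
        + Complex.I • pdv v (fun q => pdv (0,1) f q) p) := by
    intro v
    have h1 : (fun q => pdm f q)
        = fun q => ((1 : ℂ)/2) • (pdv (1,0) f q + Complex.I • pdv (0,1) f q) := rfl
    rw [h1, pdv_csmul (mdiff_add (mdiff_pdv hf _) (mdiff_csmul (mdiff_pdv hf _) _)) _,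
      pdv_add (mdiff_pdv hf _) (mdiff_csmul (mdiff_pdv hf _) _), pdv_csmul (mdiff_pdv hf _)]
  rw [pdpm, pdm_eq, pdp_eq, expand_p, expand_p, expand_m, expand_m,
    pdv_swap hf (0,1) (1,0) p]
  set a := pdv (1,0) (fun q => pdv (1,0) f q) p
  set b := pdv (1,0) (fun q => pdv (0,1) f q) p
  set d := pdv (0,1) (fun q => pdv (0,1) f q) p
  module

end CPAux

section Core

variable {N : ℕ}


lemma rank_one_sandwich (P : Matrix (Fin N) (Fin N) ℂ) (hP : P * P = P)
    (htr : P.trace = 1) (X : Matrix (Fin N) (Fin N) ℂ) :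
    P * X * P = (X * P).trace • P := by
  classical
  set f := P.mulVecLin with hfdef
  have hff : f ∘ₗ f = f := by rw [hfdef, ← Matrix.mulVecLin_mul, hP]
  have hproj : LinearMap.IsProj (LinearMap.range f) f := by
    constructor
    · intro x; exact LinearMap.mem_range_self f x
    · rintro x ⟨y, rfl⟩
      exact congrFun (congrArg DFunLike.coe hff) y
  have htrace : LinearMap.trace ℂ _ f = (Module.finrank ℂ (LinearMap.range f) : ℂ) :=
    hproj.trace
  have htrace2 : LinearMap.trace ℂ _ f = P.trace := by
    rw [LinearMap.trace_eq_matrix_trace ℂ (Pi.basisFun ℂ (Fin N)) f,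
      LinearMap.toMatrix_eq_toMatrix', hfdef, ← Matrix.toLin'_apply', LinearMap.toMatrix'_toLin']
  have hrank : Module.finrank ℂ (LinearMap.range f) = 1 := by
    have : (Module.finrank ℂ (LinearMap.range f) : ℂ) = 1 := by
      rw [← htrace, htrace2, htr]
    exact_mod_cast this
  obtain ⟨v, hv0, hvspan⟩ := finrank_eq_one_iff'.mp hrank
  -- v : range f, every element of range f is a multiple of v
  obtain ⟨c₀, hc₀⟩ := hvspan ⟨f (X.mulVec v.1), LinearMap.mem_range_self f _⟩
  have key : ∀ x : Fin N → ℂ, (P * X * P).mulVec x = c₀ • P.mulVec x := by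
    intro x
    obtain ⟨cx, hcx⟩ := hvspan ⟨f x, LinearMap.mem_range_self f x⟩
    have hfx : P.mulVec x = cx • v.1 := by
      have := congrArg Subtype.val hcx
      simpa [hfdef, Matrix.mulVecLin_apply] using this.symm
    have hfv : P.mulVec (X.mulVec v.1) = c₀ • v.1 := by
      have := congrArg Subtype.val hc₀
      simpa [hfdef, Matrix.mulVecLin_apply, Matrix.mulVec_mulVec] using this.symm
    calc (P * X * P).mulVec x = P.mulVec (X.mulVec (P.mulVec x)) := by
            rw [← Matrix.mulVec_mulVec, ← Matrix.mulVec_mulVec]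
      _ = cx • P.mulVec (X.mulVec v.1) := by
            rw [hfx, Matrix.mulVec_smul, Matrix.mulVec_smul]
      _ = cx • c₀ • v.1 := by rw [hfv]
      _ = c₀ • cx • v.1 := smul_comm _ _ _
      _ = c₀ • P.mulVec x := by rw [hfx]
  have heq : P * X * P = c₀ • P := by
    apply Matrix.ext
    intro i j
    have := congrFun (key (Pi.single j 1)) i
    simpa [Matrix.mulVec_single] using this
  have htr2 : (P * X * P).trace = (X * P).trace := by
    rw [Matrix.trace_mul_cycle, hP, Matrix.trace_mul_comm]
  have hc0 : c₀ = (X * P).trace := by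
    have := htr2
    rw [heq, Matrix.trace_smul, htr, smul_eq_mul, mul_one] at this
    exact this
  rw [heq, hc0]

/-- Pointwise algebraic core. -/
lemma key_core (PP Pp Pm P0 App Amm : Matrix (Fin N) (Fin N) ℂ) (t : ℂ)
    (hP2 : PP * PP = PP) (htrP : PP.trace = 1)
    (hsp : Pp = Pp * PP + PP * Pp) (hsm : Pm = Pm * PP + PP * Pm)
    (hEL : P0 * PP = PP * P0)
    (h5 : P0 * PP + Pp * Pm + (Pm * Pp + PP * P0) = P0)
    (htrPp : Pp.trace = 0) (htrPm : Pm.trace = 0)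
    (ht : t = (Pp * PP * Pm).trace) :
    (Pp * PP * Pm) * (Pp * PP * Pm) = t • (Pp * PP * Pm) ∧
    ((P0 * PP + Pp * Pm) * Pm + Pp * PP * Amm) * (Pp * PP * Pm)
      = (-(t*t)) • (PP * Pm)
        + ((P0 * PP + Pp * Pm) * Pm + Pp * PP * Amm).trace • (Pp * PP * Pm) ∧
    (Pp * PP * Pm) * ((App * PP + Pp * Pp) * Pm + Pp * PP * P0)
      = ((App * PP + Pp * Pp) * Pm + Pp * PP * P0).trace • (Pp * PP * Pm)
        + (-(t*t)) • (Pp * PP) ∧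
    (PP * Pm) * (Pp * PP) = t • PP := by
  have rank1 : ∀ X, PP * X * PP = (X * PP).trace • PP :=
    rank_one_sandwich PP hP2 htrP
  have r1Z : ∀ X Z, PP * (X * (PP * Z)) = (X * PP).trace • (PP * Z) := by
    intro X Z
    have h : PP * X * PP * Z = (X * PP).trace • PP * Z := by rw [rank1 X]
    simpa [Matrix.mul_assoc, Matrix.smul_mul] using h
  have hPPZ : ∀ Z, PP * (PP * Z) = PP * Z := by
    intro Z; rw [← Matrix.mul_assoc, hP2]
  have hPpP : PP * Pp * PP = 0 := by
    have h := congrArg (fun M => PP * M) hsp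
    simp only [mul_add, ← Matrix.mul_assoc, hP2] at h
    exact right_eq_add.mp h
  have hPmP : PP * Pm * PP = 0 := by
    have h := congrArg (fun M => PP * M) hsm
    simp only [mul_add, ← Matrix.mul_assoc, hP2] at h
    exact right_eq_add.mp h
  have hPpPZ : ∀ Z, PP * (Pp * (PP * Z)) = 0 := by
    intro Z
    have h : PP * Pp * PP * Z = (0 : Matrix (Fin N) (Fin N) ℂ) * Z := by rw [hPpP]
    simpa [Matrix.mul_assoc] using h
  have hPmPZ : ∀ Z, PP * (Pm * (PP * Z)) = 0 := by
    intro Z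
    have h : PP * Pm * PP * Z = (0 : Matrix (Fin N) (Fin N) ℂ) * Z := by rw [hPmP]
    simpa [Matrix.mul_assoc] using h
  set a := (P0 * PP).trace with hadef
  set θ := (Pp * Pm * PP).trace with hθdef
  -- simple trace facts
  have htrPPp : (PP * Pp).trace = 0 := by
    have h := congrArg Matrix.trace hsp
    rw [Matrix.trace_add, Matrix.trace_mul_comm Pp PP, htrPp] at h
    exact add_self_eq_zero.mp h.symm
  have htrPpPP : (Pp * PP).trace = 0 := by
    rw [Matrix.trace_mul_comm]; exact htrPPp
  have htrPPm : (PP * Pm).trace = 0 := by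
    have h := congrArg Matrix.trace hsm
    rw [Matrix.trace_add, Matrix.trace_mul_comm Pm PP, htrPm] at h
    exact add_self_eq_zero.mp h.symm
  have htrPmPP : (Pm * PP).trace = 0 := by
    rw [Matrix.trace_mul_comm]; exact htrPPm
  -- key matrix identities
  have haP : P0 * PP = a • PP := by
    calc P0 * PP = P0 * PP * PP := by rw [Matrix.mul_assoc, hP2]
    _ = PP * P0 * PP := by rw [hEL]
    _ = a • PP := by rw [rank1 P0, ← hadef]
  have hPa : PP * P0 = a • PP := by rw [← hEL, haP]
  have htt : (Pm * Pp * PP).trace = t := by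
    rw [ht]
    conv_rhs => rw [Matrix.trace_mul_cycle]
  have hL6 : PP * Pp * Pm = θ • PP := by
    conv_lhs => rw [hsm]
    rw [mul_add,
      show PP * Pp * (Pm * PP) = PP * (Pp * Pm) * PP from by simp only [Matrix.mul_assoc],
      rank1,
      show PP * Pp * (PP * Pm) = (PP * Pp * PP) * Pm from by simp only [Matrix.mul_assoc],
      hPpP, Matrix.zero_mul, add_zero, ← hθdef]
  have hL7 : Pp * Pm * PP = θ • PP := by
    conv_lhs => rw [hsp]
    rw [add_mul, add_mul,
      show Pp * PP * Pm * PP = Pp * (PP * Pm * PP) from by simp only [Matrix.mul_assoc],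
      hPmP, Matrix.mul_zero,
      show PP * Pp * Pm * PP = PP * (Pp * Pm) * PP from by simp only [Matrix.mul_assoc],
      rank1, ← hθdef, zero_add]
  have hL6' : PP * Pm * Pp = t • PP := by
    conv_lhs => rw [hsp]
    rw [mul_add,
      show PP * Pm * (Pp * PP) = PP * (Pm * Pp) * PP from by simp only [Matrix.mul_assoc],
      rank1, htt,
      show PP * Pm * (PP * Pp) = (PP * Pm * PP) * Pp from by simp only [Matrix.mul_assoc],
      hPmP, Matrix.zero_mul, add_zero]
  have hL8 : Pm * Pp * PP = t • PP := by
    conv_lhs => rw [hsm]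
    rw [add_mul, add_mul,
      show Pm * PP * Pp * PP = Pm * (PP * Pp * PP) from by simp only [Matrix.mul_assoc],
      hPpP, Matrix.mul_zero,
      show PP * Pm * Pp * PP = PP * (Pm * Pp) * PP from by simp only [Matrix.mul_assoc],
      rank1, htt, zero_add]
  -- trailing-Z versions
  have hL7Z : ∀ Z, Pp * (Pm * (PP * Z)) = θ • (PP * Z) := by
    intro Z
    have h : Pp * Pm * PP * Z = (θ • PP) * Z := by rw [hL7]
    simpa [Matrix.mul_assoc, Matrix.smul_mul] using h
  have hL8Z : ∀ Z, Pm * (Pp * (PP * Z)) = t • (PP * Z) := by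
    intro Z
    have h : Pm * Pp * PP * Z = (t • PP) * Z := by rw [hL8]
    simpa [Matrix.mul_assoc, Matrix.smul_mul] using h
  have hL6Z : ∀ Z, PP * (Pp * (Pm * Z)) = θ • (PP * Z) := by
    intro Z
    have h : PP * Pp * Pm * Z = (θ • PP) * Z := by rw [hL6]
    simpa [Matrix.mul_assoc, Matrix.smul_mul] using h
  have hL6'Z : ∀ Z, PP * (Pm * (Pp * Z)) = t • (PP * Z) := by
    intro Z
    have h : PP * Pm * Pp * Z = (t • PP) * Z := by rw [hL6']
    simpa [Matrix.mul_assoc, Matrix.smul_mul] using h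
  have hPaZ : ∀ Z, PP * (P0 * Z) = a • (PP * Z) := by
    intro Z
    have h : PP * P0 * Z = (a • PP) * Z := by rw [hPa]
    simpa [Matrix.mul_assoc, Matrix.smul_mul] using h
  -- the scalar relation a + θ + t = 0
  have hsum : a + θ + t = 0 := by
    have h := congrArg (fun M => M * PP) h5
    simp only [add_mul] at h
    rw [show P0 * PP * PP = P0 * PP from by rw [Matrix.mul_assoc, hP2],
      haP, hL7, hL8, rank1 P0, ← hadef] at h
    have h2 : (a + θ + t) • PP + a • PP = a • PP := by
      calc (a + θ + t) • PP + a • PP = a • PP + θ • PP + (t • PP + a • PP) := by module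
      _ = a • PP := h
    have h3 : (a + θ + t) • PP = 0 := add_eq_right.mp h2
    have h4 := congrArg Matrix.trace h3
    rwa [Matrix.trace_smul, htrP, Matrix.trace_zero, smul_eq_mul, mul_one] at h4
  have hat : (a + θ) * t = -(t * t) := by
    have : a + θ = -t := by linear_combination hsum
    rw [this]; ring
  -- trace rotation helper
  have rot : ∀ X Y : Matrix (Fin N) (Fin N) ℂ, (X * Y).trace = (Y * X).trace :=
    fun X Y => Matrix.trace_mul_comm X Y
  refine ⟨?_, ?_, ?_, ?_⟩
  · -- c1 : A * A = t • A
    calc (Pp * PP * Pm) * (Pp * PP * Pm)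
        = Pp * (PP * (Pm * (Pp * (PP * Pm)))) := by simp only [Matrix.mul_assoc]
      _ = Pp * (PP * (t • (PP * Pm))) := by rw [hL8Z]
      _ = t • (Pp * (PP * (PP * Pm))) := by rw [Matrix.mul_smul, Matrix.mul_smul]
      _ = t • (Pp * (PP * Pm)) := by rw [hPPZ]
      _ = t • (Pp * PP * Pm) := by rw [Matrix.mul_assoc]
  · -- c2 : Am * A
    have htrAm : ((P0 * PP + Pp * Pm) * Pm + Pp * PP * Amm).trace
        = (Amm * Pp * PP).trace := by
      rw [Matrix.trace_add, add_mul, Matrix.trace_add]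
      have e1 : ((P0 * PP) * Pm).trace = 0 := by
        rw [haP, Matrix.smul_mul, Matrix.trace_smul, htrPPm, smul_eq_mul, mul_zero]
      have e2 : ((Pp * Pm) * Pm).trace = 0 := by
        nth_rewrite 1 [hsm]
        rw [mul_add, add_mul, Matrix.trace_add,
          show Pp * (Pm * PP) * Pm = (Pp * Pm * PP) * Pm from by simp only [Matrix.mul_assoc],
          hL7, Matrix.smul_mul, Matrix.trace_smul, htrPPm, smul_eq_mul, mul_zero,
          rot (Pp * (PP * Pm)) Pm,
          show Pm * (Pp * (PP * Pm)) = t • (PP * Pm) from hL8Z Pm,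
          Matrix.trace_smul, htrPPm, smul_eq_mul, mul_zero, add_zero]
      have e3 : (Pp * PP * Amm).trace = (Amm * Pp * PP).trace := by
        rw [rot (Pp * PP) Amm, Matrix.mul_assoc]
      rw [e1, e2, e3, zero_add, zero_add]
    have T1 : (P0 * PP) * Pm * (Pp * PP * Pm) = (a * t) • (PP * Pm) := by
      rw [haP]
      calc (a • PP) * Pm * (Pp * PP * Pm) = a • (PP * (Pm * (Pp * (PP * Pm)))) := by
            simp only [Matrix.smul_mul, Matrix.mul_assoc]
        _ = a • (PP * (t • (PP * Pm))) := by rw [hL8Z]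
        _ = (a * t) • (PP * Pm) := by rw [Matrix.mul_smul, hPPZ, smul_smul]
    have T2 : (Pp * Pm) * Pm * (Pp * PP * Pm) = (t * θ) • (PP * Pm) := by
      calc (Pp * Pm) * Pm * (Pp * PP * Pm) = Pp * (Pm * (Pm * (Pp * (PP * Pm)))) := by
            simp only [Matrix.mul_assoc]
        _ = Pp * (Pm * (t • (PP * Pm))) := by rw [hL8Z]
        _ = t • (Pp * (Pm * (PP * Pm))) := by rw [Matrix.mul_smul, Matrix.mul_smul]
        _ = t • (θ • (PP * Pm)) := by rw [hL7Z]
        _ = (t * θ) • (PP * Pm) := by rw [smul_smul]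
    have T3 : Pp * PP * Amm * (Pp * PP * Pm)
        = (Amm * Pp * PP).trace • (Pp * PP * Pm) := by
      calc Pp * PP * Amm * (Pp * PP * Pm) = Pp * (PP * ((Amm * Pp) * (PP * Pm))) := by
            simp only [Matrix.mul_assoc]
        _ = Pp * (((Amm * Pp) * PP).trace • (PP * Pm)) := by rw [r1Z]
        _ = (Amm * Pp * PP).trace • (Pp * (PP * Pm)) := by rw [Matrix.mul_smul]
        _ = (Amm * Pp * PP).trace • (Pp * PP * Pm) := by rw [Matrix.mul_assoc Pp PP Pm]
    rw [htrAm]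
    calc ((P0 * PP + Pp * Pm) * Pm + Pp * PP * Amm) * (Pp * PP * Pm)
        = (P0 * PP) * Pm * (Pp * PP * Pm) + (Pp * Pm) * Pm * (Pp * PP * Pm)
          + Pp * PP * Amm * (Pp * PP * Pm) := by simp only [add_mul]
      _ = (a * t) • (PP * Pm) + (t * θ) • (PP * Pm)
          + (Amm * Pp * PP).trace • (Pp * PP * Pm) := by rw [T1, T2, T3]
      _ = (-(t*t)) • (PP * Pm) + (Amm * Pp * PP).trace • (Pp * PP * Pm) := by
          rw [show (a * t) • (PP * Pm) + (t * θ) • (PP * Pm)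
            = ((a + θ) * t) • (PP * Pm) from by module, hat]
  · -- c3 : A * Ap
    have htrAp : ((App * PP + Pp * Pp) * Pm + Pp * PP * P0).trace
        = (Pm * App * PP).trace := by
      rw [Matrix.trace_add, add_mul, Matrix.trace_add]
      have e1 : ((App * PP) * Pm).trace = (Pm * App * PP).trace := by
        rw [rot (App * PP) Pm, ← Matrix.mul_assoc]
      have e2 : ((Pp * Pp) * Pm).trace = 0 := by
        rw [rot (Pp * Pp) Pm]
        nth_rewrite 1 [hsm]
        rw [add_mul, Matrix.trace_add]
        have u1 : (Pm * PP * (Pp * Pp)).trace = 0 := by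
          rw [show Pm * PP * (Pp * Pp) = Pm * (PP * (Pp * Pp)) from by
              simp only [Matrix.mul_assoc],
            rot Pm (PP * (Pp * Pp)),
            show PP * (Pp * Pp) * Pm = PP * (Pp * (Pp * Pm)) from by
              simp only [Matrix.mul_assoc],
            rot PP (Pp * (Pp * Pm)),
            show Pp * (Pp * Pm) * PP = Pp * (Pp * (Pm * PP)) from by
              simp only [Matrix.mul_assoc],
            rot Pp (Pp * (Pm * PP)),
            show Pp * (Pm * PP) * Pp = Pp * (Pm * (PP * Pp)) from by
              simp only [Matrix.mul_assoc],
            hL7Z Pp, Matrix.trace_smul, htrPPp, smul_eq_mul, mul_zero]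
        have u2 : (PP * Pm * (Pp * Pp)).trace = 0 := by
          rw [show PP * Pm * (Pp * Pp) = PP * (Pm * (Pp * Pp)) from by
              simp only [Matrix.mul_assoc],
            hL6'Z Pp, Matrix.trace_smul, htrPPp, smul_eq_mul, mul_zero]
        rw [u1, u2, add_zero]
      have e3 : (Pp * PP * P0).trace = 0 := by
        rw [show Pp * PP * P0 = Pp * (PP * P0) from by simp only [Matrix.mul_assoc],
          hPa, Matrix.mul_smul, Matrix.trace_smul, htrPpPP, smul_eq_mul, mul_zero]
      rw [e1, e2, e3, add_zero, add_zero]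
    have F1 : (Pp * PP * Pm) * ((App * PP) * Pm)
        = (Pm * App * PP).trace • (Pp * PP * Pm) := by
      calc (Pp * PP * Pm) * ((App * PP) * Pm)
          = Pp * (PP * ((Pm * App) * (PP * Pm))) := by simp only [Matrix.mul_assoc]
        _ = Pp * (((Pm * App) * PP).trace • (PP * Pm)) := by rw [r1Z]
        _ = (Pm * App * PP).trace • (Pp * (PP * Pm)) := by rw [Matrix.mul_smul]
        _ = (Pm * App * PP).trace • (Pp * PP * Pm) := by rw [Matrix.mul_assoc Pp PP Pm]
    have F2 : (Pp * PP * Pm) * ((Pp * Pp) * Pm) = (t * θ) • (Pp * PP) := by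
      calc (Pp * PP * Pm) * ((Pp * Pp) * Pm)
          = Pp * (PP * (Pm * (Pp * (Pp * Pm)))) := by simp only [Matrix.mul_assoc]
        _ = Pp * (t • (PP * (Pp * Pm))) := by rw [hL6'Z]
        _ = Pp * (t • (θ • PP)) := by
            rw [show PP * (Pp * Pm) = θ • PP from by rw [← Matrix.mul_assoc, hL6]]
        _ = (t * θ) • (Pp * PP) := by
            rw [Matrix.mul_smul, Matrix.mul_smul, smul_smul]
    have F3 : (Pp * PP * Pm) * ((Pp * PP) * P0) = (t * a) • (Pp * PP) := by
      calc (Pp * PP * Pm) * ((Pp * PP) * P0)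
          = Pp * (PP * (Pm * (Pp * (PP * P0)))) := by simp only [Matrix.mul_assoc]
        _ = Pp * (t • (PP * (PP * P0))) := by rw [hL6'Z]
        _ = Pp * (t • (PP * P0)) := by rw [hPPZ]
        _ = Pp * (t • (a • PP)) := by rw [hPa]
        _ = (t * a) • (Pp * PP) := by
            rw [Matrix.mul_smul, Matrix.mul_smul, smul_smul]
    rw [htrAp]
    calc (Pp * PP * Pm) * ((App * PP + Pp * Pp) * Pm + Pp * PP * P0)
        = (Pp * PP * Pm) * ((App * PP) * Pm) + (Pp * PP * Pm) * ((Pp * Pp) * Pm)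
          + (Pp * PP * Pm) * ((Pp * PP) * P0) := by
          simp only [add_mul, mul_add]
      _ = (Pm * App * PP).trace • (Pp * PP * Pm) + (t * θ) • (Pp * PP)
          + (t * a) • (Pp * PP) := by rw [F1, F2, F3]
      _ = (Pm * App * PP).trace • (Pp * PP * Pm) + (-(t*t)) • (Pp * PP) := by
          rw [add_assoc, show (t * θ) • (Pp * PP) + (t * a) • (Pp * PP)
            = ((a + θ) * t) • (Pp * PP) from by module, hat]
  · -- c4
    rw [show (PP * Pm) * (Pp * PP) = PP * (Pm * Pp * PP) from by simp only [Matrix.mul_assoc],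
      hL8, Matrix.mul_smul, hP2]

end Core

/-- If `P` is a smooth family of Hermitian rank-1 projectors solving the Euler–Lagrange
equation `[∂₊∂₋P, P] = 0` and `Π₊P ≠ 0`, then `Π₋(Π₊P) = P`. -/
theorem lowering_raising_inverse {N : ℕ}
    (P : ℝ × ℝ → Matrix (Fin N) (Fin N) ℂ)
    (hdiff : ∀ i j, ContDiff ℝ (⊤ : ℕ∞) fun q => P q i j)
    (hidem : ∀ p, P p * P p = P p) (hherm : ∀ p, (P p)ᴴ = P p)
    (htr : ∀ p, Matrix.trace (P p) = 1)
    (hEL : ∀ p, pdpm P p * P p = P p * pdpm P p)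
    (hne : ∀ p, Pip P p ≠ 0) :
    ∀ p : ℝ × ℝ, Pim (fun q => Pip P q) p = P p := by
  classical
  intro p
  have hMP : CPAux.MDiff P := hdiff
  have hMPp : CPAux.MDiff (fun q => pdp P q) := CPAux.mdiff_pdp hMP
  have hMPm : CPAux.MDiff (fun q => pdm P q) := CPAux.mdiff_pdm hMP
  have hMA : CPAux.MDiff (fun q => pdp P q * P q * pdm P q) :=
    CPAux.mdiff_mul (CPAux.mdiff_mul hMPp hMP) hMPm
  set T : ℝ × ℝ → ℂ := fun q => (pdp P q * P q * pdm P q).trace with hTdef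
  have hTne : ∀ q, T q ≠ 0 := by
    intro q h0
    simp only [hTdef] at h0
    exact hne q (by rw [Pip, if_pos h0])
  have hTdiffAt : ∀ q, DifferentiableAt ℝ T q := by
    intro q
    have h : T = fun r => ∑ i, (pdp P r * P r * pdm P r) i i := by
      funext r; rfl
    rw [h]
    exact DifferentiableAt.fun_sum fun i _ => hMA.diffAt i i q
  set Q : ℝ × ℝ → Matrix (Fin N) (Fin N) ℂ :=
    fun q => (T q)⁻¹ • (pdp P q * P q * pdm P q) with hQdef
  have hQp : ∀ q, Q q = (T q)⁻¹ • (pdp P q * P q * pdm P q) := fun q => rfl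
  have hQeq : (fun q => Pip P q) = Q := by
    funext q
    rw [Pip, if_neg (hTne q)]
  have hQdAt : ∀ (q : ℝ × ℝ) (i j : Fin N), DifferentiableAt ℝ (fun r => Q r i j) q := by
    intro q i j
    have h : (fun r => Q r i j) = fun r => (T r)⁻¹ * (pdp P r * P r * pdm P r) i j := rfl
    rw [h]
    exact ((hTdiffAt q).inv (hTne q)).mul (hMA.diffAt i j q)
  -- projector split identities
  have hPfun : (fun q : ℝ × ℝ => P q * P q) = P := funext hidem
  have hsp : ∀ q, pdp P q = pdp P q * P q + P q * pdp P q := by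
    intro q
    conv_lhs => rw [← hPfun]
    exact CPAux.pdp_mul hMP hMP q
  have hsm : ∀ q, pdm P q = pdm P q * P q + P q * pdm P q := by
    intro q
    conv_lhs => rw [← hPfun]
    exact CPAux.pdm_mul hMP hMP q
  have hsplitfun : (fun q => pdp P q) = fun q => pdp P q * P q + P q * pdp P q :=
    funext hsp
  have h5 : ∀ q, pdpm P q * P q + pdp P q * pdm P q
      + (pdm P q * pdp P q + P q * pdpm P q) = pdpm P q := by
    intro q
    have h2 : pdm (fun r => pdp P r) q
        = pdm (fun r => pdp P r * P r + P r * pdp P r) q := by rw [← hsplitfun]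
    rw [CPAux.pdm_add (CPAux.mdiff_mul hMPp hMP) (CPAux.mdiff_mul hMP hMPp),
      CPAux.pdm_mul hMPp hMP, CPAux.pdm_mul hMP hMPp, CPAux.pdm_pdp_comm hMP q] at h2
    exact h2.symm
  -- traces of first derivatives vanish
  have htrPp : ∀ q, (pdp P q).trace = 0 := by
    intro q
    rw [CPAux.trace_pdp (fun i j => hMP.diffAt i j q)]
    have h : (fun r => (P r).trace) = fun _ => (1 : ℂ) := funext htr
    rw [h, CPAux.sdp]
    simp
  have htrPm : ∀ q, (pdm P q).trace = 0 := by
    intro q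
    rw [CPAux.trace_pdm (fun i j => hMP.diffAt i j q)]
    have h : (fun r => (P r).trace) = fun _ => (1 : ℂ) := funext htr
    rw [h, CPAux.sdm]
    simp
  -- the algebraic core at p
  obtain ⟨c1, c2, c3, c4⟩ := key_core (P p) (pdp P p) (pdm P p) (pdpm P p)
      (pdp (fun q => pdp P q) p) (pdm (fun q => pdm P q) p) (T p)
      (hidem p) (htr p) (hsp p) (hsm p) (hEL p) (h5 p) (htrPp p) (htrPm p)
      (by simp only [hTdef])
  -- derivative expansions of A
  have hAm : pdm (fun q => pdp P q * P q * pdm P q) p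
      = (pdpm P p * P p + pdp P p * pdm P p) * pdm P p
        + pdp P p * P p * pdm (fun q => pdm P q) p := by
    rw [CPAux.pdm_mul (CPAux.mdiff_mul hMPp hMP) hMPm,
      CPAux.pdm_mul hMPp hMP, CPAux.pdm_pdp_comm hMP p]
  have hAp : pdp (fun q => pdp P q * P q * pdm P q) p
      = (pdp (fun q => pdp P q) p * P p + pdp P p * pdp P p) * pdm P p
        + pdp P p * P p * pdpm P p := by
    rw [CPAux.pdp_mul (CPAux.mdiff_mul hMPp hMP) hMPm, CPAux.pdp_mul hMPp hMP]
    rfl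
  -- E1 : relating derivatives of A and Q
  have hTQ : (fun q => pdp P q * P q * pdm P q) = fun q => T q • Q q := by
    funext q
    rw [hQp q, smul_smul, mul_inv_cancel₀ (hTne q), one_smul]
  have htrsdm : CPAux.sdm T p
      = (pdm (fun q => pdp P q * P q * pdm P q) p).trace := by
    rw [CPAux.trace_pdm (fun i j => hMA.diffAt i j p), hTdef]
  have htrsdp : CPAux.sdp T p
      = (pdp (fun q => pdp P q * P q * pdm P q) p).trace := by
    rw [CPAux.trace_pdp (fun i j => hMA.diffAt i j p), hTdef]
  have hpdmA : pdm (fun q => pdp P q * P q * pdm P q) p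
      = (pdm (fun q => pdp P q * P q * pdm P q) p).trace • Q p + T p • pdm Q p := by
    have h1 := CPAux.pdm_smul (c := T) (f := Q) (hTdiffAt p) (hQdAt p)
    rw [← hTQ, htrsdm] at h1
    exact h1
  have hpdpA : pdp (fun q => pdp P q * P q * pdm P q) p
      = (pdp (fun q => pdp P q * P q * pdm P q) p).trace • Q p + T p • pdp Q p := by
    have h1 := CPAux.pdp_smul (c := T) (f := Q) (hTdiffAt p) (hQdAt p)
    rw [← hTQ, htrsdp] at h1
    exact h1
  -- Q is idempotent
  have hQQ : Q p * Q p = Q p := by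
    rw [hQp p, Matrix.smul_mul, Matrix.mul_smul, smul_smul, c1, smul_smul]
    congr 1
    field_simp
  -- X : T p • (pdm Q p * Q p) = -(T p) • (P p * pdm P p)
  have hAmA : pdm (fun q => pdp P q * P q * pdm P q) p * (pdp P p * P p * pdm P p)
      = (-(T p * T p)) • (P p * pdm P p)
        + (pdm (fun q => pdp P q * P q * pdm P q) p).trace • (pdp P p * P p * pdm P p) := by
    rw [hAm]
    exact c2
  have hAAp : (pdp P p * P p * pdm P p) * pdp (fun q => pdp P q * P q * pdm P q) p
      = (pdp (fun q => pdp P q * P q * pdm P q) p).trace • (pdp P p * P p * pdm P p)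
        + (-(T p * T p)) • (pdp P p * P p) := by
    rw [hAp]
    exact c3
  set β := (pdm (fun q => pdp P q * P q * pdm P q) p).trace with hβdef
  set γ := (pdp (fun q => pdp P q * P q * pdm P q) p).trace with hγdef
  have e1 : T p • pdm Q p
      = pdm (fun q => pdp P q * P q * pdm P q) p
        - β • Q p := by
    rw [hpdmA]; abel
  have e1' : T p • pdp Q p
      = pdp (fun q => pdp P q * P q * pdm P q) p
        - γ • Q p := by
    rw [hpdpA]; abel
  have hcoef : (T p)⁻¹ * (-(T p * T p)) = -(T p) := by
    have h : (T p)⁻¹ * (T p * T p) = T p := by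
      rw [← mul_assoc, inv_mul_cancel₀ (hTne p), one_mul]
    calc (T p)⁻¹ * (-(T p * T p)) = -((T p)⁻¹ * (T p * T p)) := by ring
      _ = -(T p) := by rw [h]
  have hX : T p • (pdm Q p * Q p) = (-(T p)) • (P p * pdm P p) := by
    calc T p • (pdm Q p * Q p) = (T p • pdm Q p) * Q p := by rw [Matrix.smul_mul]
      _ = pdm (fun q => pdp P q * P q * pdm P q) p * Q p
          - β • (Q p * Q p) := by
          rw [e1, Matrix.sub_mul, Matrix.smul_mul]
      _ = (T p)⁻¹ • (pdm (fun q => pdp P q * P q * pdm P q) p * (pdp P p * P p * pdm P p))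
          - β • Q p := by
          rw [hQQ]
          nth_rewrite 1 [hQp p]
          rw [Matrix.mul_smul]
      _ = ((T p)⁻¹ * (-(T p * T p))) • (P p * pdm P p)
          + ((T p)⁻¹ * β)
              • (pdp P p * P p * pdm P p)
          - β
              • ((T p)⁻¹ • (pdp P p * P p * pdm P p)) := by
          rw [hAmA, smul_add, smul_smul, smul_smul, hQp p]
      _ = (-(T p)) • (P p * pdm P p) := by
          rw [hcoef, smul_smul]
          module
  have hY : T p • (Q p * pdp Q p) = (-(T p)) • (pdp P p * P p) := by
    calc T p • (Q p * pdp Q p) = Q p * (T p • pdp Q p) := by rw [Matrix.mul_smul]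
      _ = Q p * pdp (fun q => pdp P q * P q * pdm P q) p
          - γ • (Q p * Q p) := by
          rw [e1', Matrix.mul_sub, Matrix.mul_smul]
      _ = (T p)⁻¹ • ((pdp P p * P p * pdm P p) * pdp (fun q => pdp P q * P q * pdm P q) p)
          - γ • Q p := by
          rw [hQQ]
          nth_rewrite 1 [hQp p]
          rw [Matrix.smul_mul]
      _ = ((T p)⁻¹ * γ)
              • (pdp P p * P p * pdm P p)
          + ((T p)⁻¹ * (-(T p * T p))) • (pdp P p * P p)
          - γ
              • ((T p)⁻¹ • (pdp P p * P p * pdm P p)) := by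
          rw [hAAp, smul_add, smul_smul, smul_smul, hQp p]
      _ = (-(T p)) • (pdp P p * P p) := by
          rw [hcoef, smul_smul]
          module
  have hXX : pdm Q p * Q p = (-(1 : ℂ)) • (P p * pdm P p) := by
    have h := congrArg (fun M => (T p)⁻¹ • M) hX
    simp only [smul_smul] at h
    rw [inv_mul_cancel₀ (hTne p), one_smul,
      show (T p)⁻¹ * (-(T p)) = -(1 : ℂ) from by
        rw [mul_neg, inv_mul_cancel₀ (hTne p)]] at h
    exact h
  have hYY : Q p * pdp Q p = (-(1 : ℂ)) • (pdp P p * P p) := by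
    have h := congrArg (fun M => (T p)⁻¹ • M) hY
    simp only [smul_smul] at h
    rw [inv_mul_cancel₀ (hTne p), one_smul,
      show (T p)⁻¹ * (-(T p)) = -(1 : ℂ) from by
        rw [mul_neg, inv_mul_cancel₀ (hTne p)]] at h
    exact h
  have hM : pdm Q p * Q p * pdp Q p = T p • P p := by
    calc pdm Q p * Q p * pdp Q p = (pdm Q p * Q p) * (Q p * pdp Q p) := by
          rw [show pdm Q p * Q p * pdp Q p = pdm Q p * (Q p * Q p) * pdp Q p from by
            rw [hQQ]]
          simp only [Matrix.mul_assoc]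
      _ = ((-(1 : ℂ)) • (P p * pdm P p)) * ((-(1 : ℂ)) • (pdp P p * P p)) := by
          rw [hXX, hYY]
      _ = (P p * pdm P p) * (pdp P p * P p) := by
          rw [Matrix.smul_mul, Matrix.mul_smul, smul_smul]
          norm_num
      _ = T p • P p := c4
  have htrM : (pdm Q p * Q p * pdp Q p).trace = T p := by
    rw [hM, Matrix.trace_smul, htr p, smul_eq_mul, mul_one]
  rw [hQeq, Pim, if_neg (by rw [htrM]; exact hTne p), htrM, hM, smul_smul,
    inv_mul_cancel₀ (hTne p), one_smul]
end

section
/- Let P₀ be the Veronese rank-1 projector family on ℂP², P₀ = (1/(1+|ξ|²)²)·v⊗v† with v = (1, √2 ξ, ξ²)ᵀ, ξ = ξ₁+iξ₂. Then the Lagrangian density L(P₀) = tr((∂₊P₀)(∂₋P₀)) equals 2/(1+|ξ|²)², and its integral over ℝ² (the action) equals 2π. -/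
open Matrix

open Complex in
/-- The Veronese holomorphic vector `v(ξ) = (1, √2 ξ, ξ²)ᵀ`. -/
noncomputable def veroneseVec (ξ : ℂ) : Fin 3 → ℂ :=
  ![1, (Real.sqrt 2 : ℂ) * ξ, ξ ^ 2]

/-- The coordinate `ξ = ξ₁ + iξ₂`. -/
noncomputable def zeta (p : ℝ × ℝ) : ℂ := (p.1 : ℂ) + (p.2 : ℂ) * Complex.I

/-- The Veronese rank-1 projector family on `ℂP²`. -/
noncomputable def veroneseP (p : ℝ × ℝ) : Matrix (Fin 3) (Fin 3) ℂ :=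
  (((1 + ‖zeta p‖ ^ 2 : ℝ) ^ 2 : ℝ) : ℂ)⁻¹ •
    Matrix.vecMulVec (veroneseVec (zeta p)) (star (veroneseVec (zeta p)))


/-!
Write `P₀ = Φ(ξ, ξ̄)` with `Φ(z, w) = (1 + z w)⁻² v(z) v(w)ᵀ`, holomorphic in both variables.
By the chain rule, `∂₊ P₀` and `∂₋ P₀` are the partial derivatives `∂_z Φ` and `∂_w Φ` at
`(ξ, ξ̄)`. Both are combinations of two rank-one matrices, so `tr (∂₊P₀ ∂₋P₀)` only involves the
dot products `v(z)·v(w) = (1 + zw)²`, `v(z)·v'(w) = 2z(1 + zw)`, `v'(z)·v'(w) = 2(1 + 2zw)`, and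
these add up to `2 / (1 + zw)²`. In polar coordinates the action is then
`2π ∫₀^∞ 2r / (1 + r²)² dr = 2π`.
-/

open ComplexConjugate Complex

section PartialDerivatives

variable {𝕜 : Type*} [NontriviallyNormedField 𝕜] {F : Type*} [NormedAddCommGroup F]
  [NormedSpace 𝕜 F] {G : 𝕜 × 𝕜 → F} {x : 𝕜 × 𝕜}

lemma fderiv_apply_inl_eq_deriv (hG : DifferentiableAt 𝕜 G x) :
    fderiv 𝕜 G x (1, 0) = deriv (fun z => G (z, x.2)) x.1 :=
  ((hG.hasFDerivAt.comp_hasDerivAt x.1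
    ((hasDerivAt_id x.1).prodMk (hasDerivAt_const x.1 x.2))).deriv).symm

lemma fderiv_apply_inr_eq_deriv (hG : DifferentiableAt 𝕜 G x) :
    fderiv 𝕜 G x (0, 1) = deriv (fun w => G (x.1, w)) x.2 :=
  ((hG.hasFDerivAt.comp_hasDerivAt x.2
    ((hasDerivAt_const x.2 x.1).prodMk (hasDerivAt_id x.2))).deriv).symm

end PartialDerivatives

noncomputable def zetaPair : ℝ × ℝ →L[ℝ] ℂ × ℂ :=
  (equivRealProdCLM.symm : ℝ × ℝ →L[ℝ] ℂ).prod
    ((conjCLE : ℂ →L[ℝ] ℂ).comp (equivRealProdCLM.symm : ℝ × ℝ →L[ℝ] ℂ))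

lemma zetaPair_apply (p : ℝ × ℝ) : zetaPair p = (zeta p, conj (zeta p)) := by
  simp [zetaPair, zeta, equivRealProdCLM_symm_apply]

section Wirtinger

variable {F : Type*} [NormedAddCommGroup F] [NormedSpace ℂ F] {G : ℂ × ℂ → F} {p : ℝ × ℝ}

lemma fderiv_comp_zetaPair_apply (hG : DifferentiableAt ℂ G (zetaPair p)) (u : ℝ × ℝ) :
    fderiv ℝ (G ∘ zetaPair) p u = fderiv ℂ G (zetaPair p) (zetaPair u) := by
  rw [((hG.hasFDerivAt.restrictScalars ℝ).comp p zetaPair.hasFDerivAt).fderiv]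
  rfl

lemma zetaPair_one_zero : zetaPair (1, 0) = (1, 0) + (0, 1) := by
  simp [zetaPair_apply, zeta]

lemma zetaPair_zero_one : zetaPair (0, 1) = I • (1, 0) - I • (0, 1) := by
  simp [zetaPair_apply, zeta]

lemma wirtinger_plus_comp_zetaPair (hG : DifferentiableAt ℂ G (zetaPair p)) :
    (1 / 2 : ℂ) • (fderiv ℝ (G ∘ zetaPair) p (1, 0) - I • fderiv ℝ (G ∘ zetaPair) p (0, 1)) =
      deriv (fun z => G (z, conj (zeta p))) (zeta p) := by
  rw [fderiv_comp_zetaPair_apply hG, fderiv_comp_zetaPair_apply hG, zetaPair_one_zero,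
    zetaPair_zero_one, map_add, map_sub, map_smul, map_smul, smul_sub I, smul_smul, smul_smul,
    I_mul_I, fderiv_apply_inl_eq_deriv hG]
  simp only [zetaPair_apply]
  module

lemma wirtinger_minus_comp_zetaPair (hG : DifferentiableAt ℂ G (zetaPair p)) :
    (1 / 2 : ℂ) • (fderiv ℝ (G ∘ zetaPair) p (1, 0) + I • fderiv ℝ (G ∘ zetaPair) p (0, 1)) =
      deriv (fun w => G (zeta p, w)) (conj (zeta p)) := by
  rw [fderiv_comp_zetaPair_apply hG, fderiv_comp_zetaPair_apply hG, zetaPair_one_zero,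
    zetaPair_zero_one, map_add, map_sub, map_smul, map_smul, smul_sub I, smul_smul, smul_smul,
    I_mul_I, fderiv_apply_inr_eq_deriv hG]
  simp only [zetaPair_apply]
  module

variable {N : ℕ} {Φ : ℂ × ℂ → Matrix (Fin N) (Fin N) ℂ}

lemma pdp_comp_zetaPair (hΦ : ∀ i j, DifferentiableAt ℂ (fun x => Φ x i j) (zetaPair p)) :
    pdp (Φ ∘ zetaPair) p =
      Matrix.of fun i j => deriv (fun z => Φ (z, conj (zeta p)) i j) (zeta p) := by
  ext i j
  exact wirtinger_plus_comp_zetaPair (hΦ i j)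

lemma pdm_comp_zetaPair (hΦ : ∀ i j, DifferentiableAt ℂ (fun x => Φ x i j) (zetaPair p)) :
    pdm (Φ ∘ zetaPair) p =
      Matrix.of fun i j => deriv (fun w => Φ (zeta p, w) i j) (conj (zeta p)) := by
  ext i j
  exact wirtinger_minus_comp_zetaPair (hΦ i j)

end Wirtinger

lemma trace_vecMulVec_mul_vecMulVec {n α : Type*} [Fintype n] [CommSemiring α]
    (a b c d : n → α) : trace (vecMulVec a b * vecMulVec c d) = (b ⬝ᵥ c) * (a ⬝ᵥ d) := by
  rw [vecMulVec_mul_vecMulVec, trace_vecMulVec, dotProduct_smul, smul_eq_mul]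

noncomputable def veroneseVecDeriv (z : ℂ) : Fin 3 → ℂ :=
  ![0, (Real.sqrt 2 : ℂ), 2 * z]

lemma hasDerivAt_veroneseVec (z : ℂ) : HasDerivAt veroneseVec (veroneseVecDeriv z) z := by
  rw [hasDerivAt_pi]
  intro i
  fin_cases i
  · exact hasDerivAt_const z 1
  · simpa [veroneseVec, veroneseVecDeriv] using (hasDerivAt_id z).const_mul (Real.sqrt 2 : ℂ)
  · simpa [veroneseVec, veroneseVecDeriv] using hasDerivAt_pow 2 z

lemma ofReal_sqrt_two_sq : ((Real.sqrt 2 : ℝ) : ℂ) ^ 2 = 2 := by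
  norm_cast
  exact Real.sq_sqrt zero_le_two

lemma veroneseVec_dotProduct_veroneseVec (z w : ℂ) :
    veroneseVec z ⬝ᵥ veroneseVec w = (1 + z * w) ^ 2 := by
  simp [veroneseVec, dotProduct, Fin.sum_univ_three]
  linear_combination z * w * ofReal_sqrt_two_sq

lemma veroneseVec_dotProduct_veroneseVecDeriv (z w : ℂ) :
    veroneseVec z ⬝ᵥ veroneseVecDeriv w = 2 * z * (1 + z * w) := by
  simp [veroneseVec, veroneseVecDeriv, dotProduct, Fin.sum_univ_three]
  linear_combination z * ofReal_sqrt_two_sq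

lemma veroneseVecDeriv_dotProduct_veroneseVec (z w : ℂ) :
    veroneseVecDeriv z ⬝ᵥ veroneseVec w = 2 * w * (1 + z * w) := by
  rw [dotProduct_comm, veroneseVec_dotProduct_veroneseVecDeriv, mul_comm w z]

lemma veroneseVecDeriv_dotProduct_veroneseVecDeriv (z w : ℂ) :
    veroneseVecDeriv z ⬝ᵥ veroneseVecDeriv w = 2 * (1 + 2 * z * w) := by
  simp [veroneseVecDeriv, dotProduct, Fin.sum_univ_three]
  linear_combination ofReal_sqrt_two_sq

lemma star_veroneseVec (z : ℂ) : star (veroneseVec z) = veroneseVec (conj z) := by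
  ext i
  fin_cases i <;> simp [veroneseVec]

noncomputable def veroneseProj (x : ℂ × ℂ) : Matrix (Fin 3) (Fin 3) ℂ :=
  ((1 + x.1 * x.2) ^ 2)⁻¹ • vecMulVec (veroneseVec x.1) (veroneseVec x.2)

noncomputable def veroneseProjDerivFst (x : ℂ × ℂ) : Matrix (Fin 3) (Fin 3) ℂ :=
  ((1 + x.1 * x.2) ^ 2)⁻¹ • vecMulVec (veroneseVecDeriv x.1) (veroneseVec x.2) -
    (2 * x.2 / (1 + x.1 * x.2) ^ 3) • vecMulVec (veroneseVec x.1) (veroneseVec x.2)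

lemma ofReal_one_add_norm_sq_sq (z : ℂ) :
    (((1 + ‖z‖ ^ 2) ^ 2 : ℝ) : ℂ) = (1 + z * conj z) ^ 2 := by
  rw [mul_conj, normSq_eq_norm_sq]
  push_cast
  ring

lemma one_add_mul_conj_ne_zero (z : ℂ) : 1 + z * conj z ≠ 0 := by
  rw [mul_conj]
  exact_mod_cast (add_pos_of_pos_of_nonneg one_pos (normSq_nonneg z)).ne'

lemma veroneseP_eq_comp : veroneseP = veroneseProj ∘ zetaPair := by
  funext p
  rw [veroneseP, Function.comp_apply, veroneseProj, zetaPair_apply, star_veroneseVec,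
    ofReal_one_add_norm_sq_sq]

lemma veroneseProj_swap_apply (x : ℂ × ℂ) (i j : Fin 3) :
    veroneseProj x.swap j i = veroneseProj x i j := by
  simp only [veroneseProj, Prod.fst_swap, Prod.snd_swap, Matrix.smul_apply, vecMulVec_apply,
    smul_eq_mul]
  ring

lemma hasDerivAt_veroneseProj_apply_fst {z w : ℂ} (h : 1 + z * w ≠ 0) (i j : Fin 3) :
    HasDerivAt (fun z => veroneseProj (z, w) i j) (veroneseProjDerivFst (z, w) i j) z := by
  have hs : HasDerivAt (fun z => (1 + z * w) ^ 2) (2 * (1 + z * w) * w) z := by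
    simpa using (((hasDerivAt_id z).mul_const w).const_add 1).fun_pow 2
  have hv := (hasDerivAt_pi.mp (hasDerivAt_veroneseVec z) i).mul_const (veroneseVec w j)
  refine ((hs.fun_inv (pow_ne_zero 2 h)).fun_mul hv).congr_deriv ?_
  simp only [veroneseProjDerivFst, Matrix.sub_apply, Matrix.smul_apply, vecMulVec_apply,
    smul_eq_mul]
  field_simp
  ring

lemma differentiableAt_veroneseProj_apply {x : ℂ × ℂ} (h : 1 + x.1 * x.2 ≠ 0) (i j : Fin 3) :
    DifferentiableAt ℂ (fun y => veroneseProj y i j) x := by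
  have hv (k : Fin 3) : Differentiable ℂ (fun z => veroneseVec z k) := fun z =>
    (hasDerivAt_pi.mp (hasDerivAt_veroneseVec z) k).differentiableAt
  simp only [veroneseProj, Matrix.smul_apply, vecMulVec_apply, smul_eq_mul]
  fun_prop (disch := exact pow_ne_zero 2 h)

lemma trace_veroneseProjDerivFst_mul_transpose_swap {x : ℂ × ℂ} (h : 1 + x.1 * x.2 ≠ 0) :
    trace (veroneseProjDerivFst x * (veroneseProjDerivFst x.swap)ᵀ) =
      2 / (1 + x.1 * x.2) ^ 2 := by
  obtain ⟨z, w⟩ := x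
  simp only [veroneseProjDerivFst, Prod.fst_swap, Prod.snd_swap, transpose_sub, transpose_smul,
    transpose_vecMulVec, mul_comm w z, sub_mul, mul_sub, smul_mul_smul_comm, trace_sub,
    trace_smul, trace_vecMulVec_mul_vecMulVec, veroneseVec_dotProduct_veroneseVec,
    veroneseVec_dotProduct_veroneseVecDeriv, veroneseVecDeriv_dotProduct_veroneseVec,
    veroneseVecDeriv_dotProduct_veroneseVecDeriv, smul_eq_mul]
  field_simp
  ring

lemma pdp_veroneseP (p : ℝ × ℝ) : pdp veroneseP p = veroneseProjDerivFst (zetaPair p) := by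
  have h := one_add_mul_conj_ne_zero (zeta p)
  rw [veroneseP_eq_comp, pdp_comp_zetaPair fun i j => differentiableAt_veroneseProj_apply
    (by rwa [zetaPair_apply]) i j]
  ext i j
  rw [zetaPair_apply]
  exact (hasDerivAt_veroneseProj_apply_fst h i j).deriv

-- `Φ(z, w) = Φ(w, z)ᵀ`, so `∂_w Φ` is the transpose of `∂_z Φ` at the swapped point.
lemma pdm_veroneseP (p : ℝ × ℝ) :
    pdm veroneseP p = (veroneseProjDerivFst (zetaPair p).swap)ᵀ := by
  have h := one_add_mul_conj_ne_zero (zeta p)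
  rw [veroneseP_eq_comp, pdm_comp_zetaPair fun i j => differentiableAt_veroneseProj_apply
    (by rwa [zetaPair_apply]) i j]
  ext i j
  simp only [zetaPair_apply, Prod.swap_prod_mk, of_apply, transpose_apply,
    ← veroneseProj_swap_apply (zeta p, _) i j]
  exact (hasDerivAt_veroneseProj_apply_fst (by rwa [mul_comm]) j i).deriv

lemma trace_pdp_veroneseP_mul_pdm (p : ℝ × ℝ) :
    trace (pdp veroneseP p * pdm veroneseP p) = 2 / (1 + zeta p * conj (zeta p)) ^ 2 := by
  have h : 1 + (zetaPair p).1 * (zetaPair p).2 ≠ 0 := by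
    rw [zetaPair_apply]
    exact one_add_mul_conj_ne_zero (zeta p)
  rw [pdp_veroneseP, pdm_veroneseP, trace_veroneseProjDerivFst_mul_transpose_swap h,
    zetaPair_apply]

lemma norm_zeta_sq (p : ℝ × ℝ) : ‖zeta p‖ ^ 2 = p.1 ^ 2 + p.2 ^ 2 := by
  rw [Complex.sq_norm, zeta, normSq_add_mul_I]

open MeasureTheory Real Set

lemma integral_comp_sq_add_sq (f : ℝ → ℝ) :
    ∫ p : ℝ × ℝ, f (p.1 ^ 2 + p.2 ^ 2) = 2 * π * ∫ r in Ioi 0, r * f (r ^ 2) := by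
  have hpolar (q : ℝ × ℝ) :
      q.1 • f ((polarCoord.symm q).1 ^ 2 + (polarCoord.symm q).2 ^ 2) = q.1 * f (q.1 ^ 2) * 1 := by
    simp only [polarCoord_symm_apply, smul_eq_mul, mul_one, mul_pow, ← mul_add,
      Real.cos_sq_add_sin_sq]
  rw [← integral_comp_polarCoord_symm, polarCoord_target, Measure.volume_eq_prod]
  simp_rw [hpolar]
  refine (setIntegral_prod_mul (fun r => r * f (r ^ 2)) (fun _ => (1 : ℝ)) _ _).trans ?_
  simp [pi_pos.le]
  ring

lemma integral_Ioi_mul_two_div_one_add_sq_sq :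
    ∫ r in Ioi (0 : ℝ), r * (2 / (1 + r ^ 2) ^ 2) = 1 := by
  have hderiv (r : ℝ) (_ : r ∈ Ici 0) :
      HasDerivAt (fun r => -(1 + r ^ 2)⁻¹) (r * (2 / (1 + r ^ 2) ^ 2)) r := by
    refine (((hasDerivAt_pow 2 r).const_add 1).fun_inv (by positivity)).fun_neg.congr_deriv ?_
    ring
  have hnonneg (r : ℝ) (hr : r ∈ Ioi 0) : 0 ≤ r * (2 / (1 + r ^ 2) ^ 2) := by
    have : 0 < r := hr
    positivity
  have hlim : Filter.Tendsto (fun r : ℝ => -(1 + r ^ 2)⁻¹) Filter.atTop (nhds 0) := by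
    simpa using (Filter.tendsto_atTop_add_const_left _ (1 : ℝ)
      (Filter.tendsto_pow_atTop two_ne_zero)).inv_tendsto_atTop.neg
  rw [integral_Ioi_of_hasDerivAt_of_nonneg' hderiv hnonneg hlim]
  norm_num

/-- The Lagrangian density of the Veronese projector equals `2/(1+|ξ|²)²` and its total
integral (the action) equals `2π`. -/
theorem veronese_lagrangian_and_action :
    (∀ p : ℝ × ℝ,
        Matrix.trace (pdp veroneseP p * pdm veroneseP p) =
          (2 : ℂ) / (((1 + ‖zeta p‖ ^ 2 : ℝ) ^ 2 : ℝ) : ℂ)) ∧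
      ∫ p : ℝ × ℝ, (Matrix.trace (pdp veroneseP p * pdm veroneseP p)).re =
        2 * Real.pi := by
  refine ⟨fun p => by rw [trace_pdp_veroneseP_mul_pdm, ofReal_one_add_norm_sq_sq], ?_⟩
  have hdensity (p : ℝ × ℝ) : (trace (pdp veroneseP p * pdm veroneseP p)).re =
      2 / (1 + (p.1 ^ 2 + p.2 ^ 2)) ^ 2 := by
    rw [trace_pdp_veroneseP_mul_pdm, ← ofReal_one_add_norm_sq_sq, norm_zeta_sq]
    norm_cast
  simp_rw [hdensity]
  rw [integral_comp_sq_add_sq fun u => 2 / (1 + u) ^ 2, integral_Ioi_mul_two_div_one_add_sq_sq,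
    mul_one]
end
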